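/- arXiv:0907.4866 — 7 statements merged into one kernel-verified Lean document; each statement's English description precedes it below -/
import Mathlib

section
/- Let X, Y : ℝ^d → ℝ^d be Borel measurable, let ρ : ℝ^d → (0,∞) be Borel measurable with ρ locally integrable, and let 𝒞 be a countable subset of C_c⁺(ℝ^d) that is dense in C_c⁺(ℝ^d) with respect to the uniform norm. Assume that ∫_{ℝ^d} φ(Y(x)) ψ(x) dx = ∫_{ℝ^d} φ(x) ψ(X(x)) ρ(x) dx for all φ, ψ ∈ 𝒞. Then X(Y(x)) = x and Y(X(x)) = x for Lebesgue-almost every x ∈ ℝ^d (so Y is a measurable inverse of X up to null sets), and ∫_{ℝ^d} φ(Y(x)) dx = ∫_{ℝ^d} φ(x) ρ(x) dx for every Borel measurable φ : ℝ^d → [0,∞], i.e. the image of Lebesgue measure under Y equals ρ·ℒ. -/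
/-!
Both sides of the hypothesis integrate `φ(p.1) ψ(p.2)` against a measure on `ℝ^d × ℝ^d`:
`π₁ = (Y, id)_* ℒ` and `π₂ = (id, X)_* (ρ ℒ)`. Freezing one factor compares a finite measure with
one that is finite on compacts on a uniformly dense family of test functions; approximating from
both sides, with errors bounded by the total mass and by the mass of a compact support, first
shows that the second measure is finite too and then that the two agree on all of `C_c⁺`, hence
coincide. Doing this in `φ` for fixed `ψ ∈ 𝒞`, and then in `ψ` for a fixed set of finite
`ρ ℒ`-measure, gives `π₁ = π₂` on rectangles, hence `π₁ = π₂`. As `π₂` lives on the graph of `X`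
and `π₁` on the transposed graph of `Y`, this yields `X ∘ Y = id` `ℒ`-a.e. and `Y ∘ X = id`
`ρ ℒ`-a.e. (so `ℒ`-a.e., as `ρ > 0`), and the first marginal gives `Y_* ℒ = ρ ℒ`.
-/

open MeasureTheory Set Filter Topology
open scoped ENNReal

def UniformlyDenseInCcNonneg {α : Type*} [TopologicalSpace α] (𝒞 : Set (α → ℝ)) : Prop :=
  ∀ φ : α → ℝ, Continuous φ → HasCompactSupport φ → (∀ x, 0 ≤ φ x) →
    ∀ ε > 0, ∃ ψ ∈ 𝒞, ∀ x, |φ x - ψ x| ≤ ε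

theorem ENNReal.le_of_forall_pos_le_add_ofReal_mul {a b C : ℝ≥0∞} (hC : C ≠ ∞)
    (h : ∀ ε : ℝ, 0 < ε → a ≤ b + ENNReal.ofReal ε * C) : a ≤ b := by
  have hlim : Tendsto (fun ε : ℝ => b + ENNReal.ofReal ε * C) (𝓝[>] 0) (𝓝 b) := by
    have := ENNReal.Tendsto.mul_const (ENNReal.continuous_ofReal.tendsto 0) (b := C) (.inr hC)
    simpa using tendsto_const_nhds.add (this.mono_left nhdsWithin_le_nhds)
  exact ge_of_tendsto hlim (eventually_nhdsWithin_of_forall h)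

theorem lintegral_ofReal_le_add_mul_measure {α : Type*} [MeasurableSpace α] {μ : Measure α}
    {f g : α → ℝ} {s : Set α} {ε : ℝ} (hs : MeasurableSet s) (hfg : ∀ x ∈ s, f x ≤ g x + ε)
    (hf : ∀ x ∉ s, f x ≤ 0) :
    ∫⁻ x, ENNReal.ofReal (f x) ∂μ ≤ ∫⁻ x, ENNReal.ofReal (g x) ∂μ + ENNReal.ofReal ε * μ s := by
  calc ∫⁻ x, ENNReal.ofReal (f x) ∂μ
      ≤ ∫⁻ x, ENNReal.ofReal (g x) + s.indicator (fun _ => ENNReal.ofReal ε) x ∂μ := by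
        refine lintegral_mono fun x => ?_
        by_cases hx : x ∈ s
        · rw [indicator_of_mem hx]
          exact (ENNReal.ofReal_le_ofReal (hfg x hx)).trans ENNReal.ofReal_add_le
        · rw [ENNReal.ofReal_of_nonpos (hf x hx)]
          exact zero_le
    _ = ∫⁻ x, ENNReal.ofReal (g x) ∂μ + ENNReal.ofReal ε * μ s := by
        rw [lintegral_add_right _ (measurable_const.indicator hs), lintegral_indicator_const hs]

theorem lintegral_ofReal_mul_lt_top {α : Type*} [TopologicalSpace α] [MeasurableSpace α]
    [OpensMeasurableSpace α] {μ : Measure α} [IsFiniteMeasureOnCompacts μ] {f g : α → ℝ} {C : ℝ}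
    (hfc : Continuous f) (hfs : HasCompactSupport f) (hg : ∀ x, g x ≤ C) :
    ∫⁻ x, ENNReal.ofReal (f x) * ENNReal.ofReal (g x) ∂μ < ∞ := by
  calc ∫⁻ x, ENNReal.ofReal (f x) * ENNReal.ofReal (g x) ∂μ
      ≤ ∫⁻ x, ENNReal.ofReal (f x) * ENNReal.ofReal C ∂μ :=
        lintegral_mono fun x => by gcongr; exact hg x
    _ = (∫⁻ x, ENNReal.ofReal (f x) ∂μ) * ENNReal.ofReal C :=
        lintegral_mul_const _ hfc.measurable.ennreal_ofReal
    _ < ∞ := ENNReal.mul_lt_top (hfc.integrable_of_hasCompactSupport hfs).lintegral_lt_top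
        ENNReal.ofReal_lt_top

theorem isFiniteMeasureOnCompacts_withDensity_of_le {α : Type*} [TopologicalSpace α]
    [MeasurableSpace α] {μ : Measure α} [IsFiniteMeasureOnCompacts μ] {f : α → ℝ≥0∞} {C : ℝ≥0∞}
    (hC : C ≠ ∞) (hf : ∀ x, f x ≤ C) : IsFiniteMeasureOnCompacts (μ.withDensity f) where
  lt_top_of_isCompact K hK := calc
    μ.withDensity f K ≤ μ.withDensity (fun _ => C) K := withDensity_mono (ae_of_all _ hf) K
    _ = C * μ K := by rw [withDensity_const, Measure.smul_apply, smul_eq_mul]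
    _ < ∞ := ENNReal.mul_lt_top hC.lt_top hK.measure_lt_top

theorem MeasureTheory.LocallyIntegrable.isLocallyFiniteMeasure_withDensity_ofReal {α : Type*}
    [TopologicalSpace α] [MeasurableSpace α] [OpensMeasurableSpace α] {μ : Measure α}
    {f : α → ℝ} (hf : LocallyIntegrable f μ) :
    IsLocallyFiniteMeasure (μ.withDensity fun x => ENNReal.ofReal (f x)) where
  finiteAtNhds x := by
    obtain ⟨U, hU, hfU⟩ := hf x
    obtain ⟨V, hVU, hV, hxV⟩ := mem_nhds_iff.1 hU
    refine ⟨V, hV.mem_nhds hxV, ?_⟩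
    rw [withDensity_apply _ hV.measurableSet]
    exact (hfU.mono_set hVU).lintegral_lt_top

theorem lintegral_ofReal_le_of_uniformlyDense {α : Type*} [TopologicalSpace α]
    [MeasurableSpace α] [OpensMeasurableSpace α] {μ ν : Measure α} [IsFiniteMeasure μ]
    [IsFiniteMeasureOnCompacts ν] {𝒞 : Set (α → ℝ)} (h𝒞 : UniformlyDenseInCcNonneg 𝒞)
    (h : ∀ ψ ∈ 𝒞, ∫⁻ x, ENNReal.ofReal (ψ x) ∂μ = ∫⁻ x, ENNReal.ofReal (ψ x) ∂ν)
    {φ : α → ℝ} (hφc : Continuous φ) (hφs : HasCompactSupport φ) (hφ0 : ∀ x, 0 ≤ φ x) :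
    ∫⁻ x, ENNReal.ofReal (φ x) ∂ν ≤ ∫⁻ x, ENNReal.ofReal (φ x) ∂μ := by
  have hK : MeasurableSet (tsupport φ) := (isClosed_tsupport φ).measurableSet
  refine ENNReal.le_of_forall_pos_le_add_ofReal_mul
    (ENNReal.add_ne_top.2 ⟨measure_ne_top μ univ, (hφs.isCompact.measure_lt_top (μ := ν)).ne⟩)
    fun ε hε => ?_
  obtain ⟨ψ, hψ, hφψ⟩ := h𝒞 φ hφc hφs hφ0 ε hε
  calc ∫⁻ x, ENNReal.ofReal (φ x) ∂ν
      ≤ ∫⁻ x, ENNReal.ofReal (ψ x) ∂ν + ENNReal.ofReal ε * ν (tsupport φ) :=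
        lintegral_ofReal_le_add_mul_measure hK
          (fun x _ => by linarith [(abs_le.1 (hφψ x)).2])
          (fun x hx => (image_eq_zero_of_notMem_tsupport hx).le)
    _ ≤ (∫⁻ x, ENNReal.ofReal (φ x) ∂μ + ENNReal.ofReal ε * μ univ)
          + ENNReal.ofReal ε * ν (tsupport φ) := by
        rw [← h ψ hψ]
        gcongr
        exact lintegral_ofReal_le_add_mul_measure MeasurableSet.univ
          (fun x _ => by linarith [(abs_le.1 (hφψ x)).1]) (fun x hx => (hx (mem_univ x)).elim)
    _ = ∫⁻ x, ENNReal.ofReal (φ x) ∂μ + ENNReal.ofReal ε * (μ univ + ν (tsupport φ)) := by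
        ring

section LocallyCompact

variable {α : Type*} [TopologicalSpace α] [T2Space α] [LocallyCompactSpace α]
  [MeasurableSpace α] [BorelSpace α]

theorem MeasureTheory.Measure.ext_of_lintegral_ofReal_eq {μ ν : Measure α} [μ.Regular]
    [ν.Regular]
    (h : ∀ φ : α → ℝ, Continuous φ → HasCompactSupport φ → (∀ x, 0 ≤ φ x) →
      ∫⁻ x, ENNReal.ofReal (φ x) ∂μ = ∫⁻ x, ENNReal.ofReal (φ x) ∂ν) : μ = ν := by
  refine Measure.ext_of_integral_eq_on_compactlySupported_nnreal fun f => ?_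
  have hc : Continuous fun x => (f x : ℝ) := by fun_prop
  have hs : HasCompactSupport fun x => (f x : ℝ) := f.hasCompactSupport.comp_left NNReal.coe_zero
  have hint : ∀ κ : Measure α,
      ∫ x, (f x : ℝ) ∂κ = (∫⁻ x, ENNReal.ofReal (f x) ∂κ).toReal := fun κ =>
    integral_eq_lintegral_of_nonneg_ae (ae_of_all _ fun x => (f x).2) hc.aestronglyMeasurable
  exact (hint μ).trans ((congrArg _ (h _ hc hs fun x => (f x).2)).trans (hint ν).symm)

theorem measure_univ_le_of_lintegral_ofReal_le [SigmaCompactSpace α] {μ ν : Measure α}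
    (h : ∀ φ : α → ℝ, Continuous φ → HasCompactSupport φ → (∀ x, 0 ≤ φ x) →
      ∫⁻ x, ENNReal.ofReal (φ x) ∂ν ≤ ∫⁻ x, ENNReal.ofReal (φ x) ∂μ) : ν univ ≤ μ univ := by
  have hle (n : ℕ) : ν (compactCovering α n) ≤ μ univ := by
    have hK := isCompact_compactCovering α n
    obtain ⟨f, hf1, -, hfs, hf01⟩ :=
      exists_continuous_one_zero_of_isCompact hK isClosed_empty (disjoint_empty _)
    calc ν (compactCovering α n)
        = ∫⁻ _ in compactCovering α n, 1 ∂ν := (setLIntegral_one _).symm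
      _ = ∫⁻ x in compactCovering α n, ENNReal.ofReal (f x) ∂ν :=
          setLIntegral_congr_fun hK.measurableSet fun x hx => by simp [hf1 hx]
      _ ≤ ∫⁻ x, ENNReal.ofReal (f x) ∂ν := setLIntegral_le_lintegral _ _
      _ ≤ ∫⁻ x, ENNReal.ofReal (f x) ∂μ := h f f.continuous hfs fun x => (hf01 x).1
      _ ≤ ∫⁻ _, 1 ∂μ := lintegral_mono fun x => ENNReal.ofReal_le_one.2 (hf01 x).2
      _ = μ univ := lintegral_one
  calc ν univ = ⨆ n, ν (compactCovering α n) := by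
        rw [← Monotone.measure_iUnion (compactCovering_subset α), iUnion_compactCovering]
    _ ≤ μ univ := iSup_le hle

theorem MeasureTheory.Measure.eq_of_uniformlyDense [SecondCountableTopology α]
    {μ ν : Measure α} [IsFiniteMeasure μ] [IsFiniteMeasureOnCompacts ν] {𝒞 : Set (α → ℝ)}
    (h𝒞 : UniformlyDenseInCcNonneg 𝒞)
    (h : ∀ ψ ∈ 𝒞, ∫⁻ x, ENNReal.ofReal (ψ x) ∂μ = ∫⁻ x, ENNReal.ofReal (ψ x) ∂ν) : μ = ν := by
  have hνμ := fun φ => lintegral_ofReal_le_of_uniformlyDense (φ := φ) h𝒞 h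
  -- once `ν` is known to be finite, the comparison runs with the roles of `μ` and `ν` swapped
  have : IsFiniteMeasure ν :=
    ⟨(measure_univ_le_of_lintegral_ofReal_le hνμ).trans_lt (measure_lt_top μ univ)⟩
  have hμν := fun φ =>
    lintegral_ofReal_le_of_uniformlyDense (φ := φ) h𝒞 fun ψ hψ => (h ψ hψ).symm
  exact Measure.ext_of_lintegral_ofReal_eq fun φ hc hs h0 =>
    le_antisymm (hμν φ hc hs h0) (hνμ φ hc hs h0)

end LocallyCompact

section Coupling

variable {α : Type*} [TopologicalSpace α] [T2Space α] [LocallyCompactSpace α]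
  [SecondCountableTopology α] [MeasurableSpace α] [BorelSpace α]
  {ℒ μ : Measure α} {X Y : α → α} {𝒞 : Set (α → ℝ)}

theorem map_withDensity_eq_withDensity_comp [IsFiniteMeasureOnCompacts ℒ]
    [IsFiniteMeasureOnCompacts μ] (hX : Measurable X) (hY : Measurable Y)
    (h𝒞sub : ∀ φ ∈ 𝒞, Continuous φ ∧ HasCompactSupport φ ∧ ∀ x, 0 ≤ φ x)
    (h𝒞dense : UniformlyDenseInCcNonneg 𝒞)
    (hEq : ∀ φ ∈ 𝒞, ∀ ψ ∈ 𝒞, ∫⁻ x, ENNReal.ofReal (φ (Y x)) * ENNReal.ofReal (ψ x) ∂ℒ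
      = ∫⁻ x, ENNReal.ofReal (φ x) * ENNReal.ofReal (ψ (X x)) ∂μ)
    {ψ : α → ℝ} (hψ : ψ ∈ 𝒞) :
    (ℒ.withDensity fun x => ENNReal.ofReal (ψ x)).map Y
      = μ.withDensity fun x => ENNReal.ofReal (ψ (X x)) := by
  obtain ⟨hψc, hψs, -⟩ := h𝒞sub ψ hψ
  have : IsFiniteMeasure (ℒ.withDensity fun x => ENNReal.ofReal (ψ x)) :=
    isFiniteMeasure_withDensity_ofReal (hψc.integrable_of_hasCompactSupport hψs).2
  obtain ⟨C, hC⟩ := hψc.bddAbove_range_of_hasCompactSupport hψs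
  have : IsFiniteMeasureOnCompacts (μ.withDensity fun x => ENNReal.ofReal (ψ (X x))) :=
    isFiniteMeasureOnCompacts_withDensity_of_le ENNReal.ofReal_ne_top
      fun x => ENNReal.ofReal_le_ofReal (hC (mem_range_self (X x)))
  refine Measure.eq_of_uniformlyDense h𝒞dense fun φ hφ => ?_
  have hφm := (h𝒞sub φ hφ).1.measurable
  rw [lintegral_map hφm.ennreal_ofReal hY,
    lintegral_withDensity_eq_lintegral_mul _ (by fun_prop) (by fun_prop),
    lintegral_withDensity_eq_lintegral_mul _ (by fun_prop) (by fun_prop)]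
  simpa only [Pi.mul_apply, mul_comm] using hEq φ hφ ψ hψ

theorem restrict_preimage_eq_map_restrict [IsLocallyFiniteMeasure ℒ]
    [IsFiniteMeasureOnCompacts μ] (hX : Measurable X) (hY : Measurable Y)
    (h𝒞sub : ∀ φ ∈ 𝒞, Continuous φ ∧ HasCompactSupport φ ∧ ∀ x, 0 ≤ φ x)
    (h𝒞dense : UniformlyDenseInCcNonneg 𝒞)
    (hEq : ∀ φ ∈ 𝒞, ∀ ψ ∈ 𝒞, ∫⁻ x, ENNReal.ofReal (φ (Y x)) * ENNReal.ofReal (ψ x) ∂ℒ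
      = ∫⁻ x, ENNReal.ofReal (φ x) * ENNReal.ofReal (ψ (X x)) ∂μ)
    {A : Set α} (hA : MeasurableSet A) (hμA : μ A ≠ ∞) :
    ℒ.restrict (Y ⁻¹' A) = (μ.restrict A).map X := by
  have : IsFiniteMeasure (μ.restrict A) := isFiniteMeasure_restrict.2 hμA
  refine (Measure.eq_of_uniformlyDense h𝒞dense fun ψ hψ => ?_).symm
  have hψA := congrArg (· A) (map_withDensity_eq_withDensity_comp hX hY h𝒞sub h𝒞dense hEq hψ)
  rw [Measure.map_apply hY hA, withDensity_apply _ (hY hA), withDensity_apply _ hA] at hψA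
  rw [lintegral_map (h𝒞sub ψ hψ).1.measurable.ennreal_ofReal hX, hψA]

theorem measure_inter_preimage_eq [IsLocallyFiniteMeasure ℒ] [IsLocallyFiniteMeasure μ]
    (hX : Measurable X) (hY : Measurable Y)
    (h𝒞sub : ∀ φ ∈ 𝒞, Continuous φ ∧ HasCompactSupport φ ∧ ∀ x, 0 ≤ φ x)
    (h𝒞dense : UniformlyDenseInCcNonneg 𝒞)
    (hEq : ∀ φ ∈ 𝒞, ∀ ψ ∈ 𝒞, ∫⁻ x, ENNReal.ofReal (φ (Y x)) * ENNReal.ofReal (ψ x) ∂ℒ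
      = ∫⁻ x, ENNReal.ofReal (φ x) * ENNReal.ofReal (ψ (X x)) ∂μ)
    {A B : Set α} (hA : MeasurableSet A) (hB : MeasurableSet B) :
    ℒ (B ∩ Y ⁻¹' A) = μ (X ⁻¹' B ∩ A) := by
  set S := fun n => A ∩ spanningSets μ n
  have hS : Monotone S := fun m n hmn => inter_subset_inter_right _ (monotone_spanningSets μ hmn)
  have hSA : ⋃ n, S n = A := by rw [← inter_iUnion, iUnion_spanningSets, inter_univ]
  have hfin (n : ℕ) : ℒ (B ∩ Y ⁻¹' S n) = μ (X ⁻¹' B ∩ S n) := by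
    have hSn : MeasurableSet (S n) := hA.inter (measurableSet_spanningSets μ n)
    have := congrArg (· B) <| restrict_preimage_eq_map_restrict hX hY h𝒞sub h𝒞dense hEq hSn
      ((measure_mono inter_subset_right).trans_lt (measure_spanningSets_lt_top μ n)).ne
    simpa only [Measure.restrict_apply hB, Measure.map_apply hX hB,
      Measure.restrict_apply (hX hB)] using this
  rw [← hSA, preimage_iUnion, inter_iUnion, inter_iUnion,
    Monotone.measure_iUnion fun m n hmn => inter_subset_inter_right _ (preimage_mono (hS hmn)),
    Monotone.measure_iUnion fun m n hmn => inter_subset_inter_right _ (hS hmn)]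
  exact iSup_congr hfin

theorem map_prodMk_eq_of_uniformlyDense [IsLocallyFiniteMeasure ℒ] [IsLocallyFiniteMeasure μ]
    (hX : Measurable X) (hY : Measurable Y)
    (h𝒞sub : ∀ φ ∈ 𝒞, Continuous φ ∧ HasCompactSupport φ ∧ ∀ x, 0 ≤ φ x)
    (h𝒞dense : UniformlyDenseInCcNonneg 𝒞)
    (hEq : ∀ φ ∈ 𝒞, ∀ ψ ∈ 𝒞, ∫⁻ x, ENNReal.ofReal (φ (Y x)) * ENNReal.ofReal (ψ x) ∂ℒ
      = ∫⁻ x, ENNReal.ofReal (φ x) * ENNReal.ofReal (ψ (X x)) ∂μ) :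
    ℒ.map (fun v => (Y v, v)) = μ.map (fun u => (u, X u)) := by
  have hYm : Measurable fun v => (Y v, v) := hY.prodMk measurable_id
  have hXm : Measurable fun u => (u, X u) := measurable_id.prodMk hX
  refine Measure.ext_of_generateFrom_of_iUnion _ (fun n => univ ×ˢ spanningSets ℒ n)
    generateFrom_prod.symm isPiSystem_prod ?_ (fun n => ?_) (fun n => ?_) ?_
  · rw [← prod_iUnion, iUnion_spanningSets, univ_prod_univ]
  · exact mem_image2_of_mem MeasurableSet.univ (measurableSet_spanningSets ℒ n)
  · rw [Measure.map_apply hYm (MeasurableSet.univ.prod (measurableSet_spanningSets ℒ n)),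
      mk_preimage_prod, preimage_univ, univ_inter, preimage_id']
    exact (measure_spanningSets_lt_top ℒ n).ne
  · rintro _ ⟨A, hA, B, hB, rfl⟩
    rw [Measure.map_apply hYm (hA.prod hB), Measure.map_apply hXm (hA.prod hB),
      mk_preimage_prod, mk_preimage_prod, preimage_id', preimage_id', inter_comm,
      measure_inter_preimage_eq hX hY h𝒞sub h𝒞dense hEq hA hB, inter_comm]

end Coupling

section Graph

variable {α β : Type*} [MeasurableSpace α] [MeasurableSpace β] {ℒ : Measure α} {μ : Measure β}
  {X : β → α} {Y : α → β}

theorem ae_apply_apply_eq_of_map_prodMk_eq [MeasurableEq α] (hX : Measurable X)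
    (hY : Measurable Y) (h : ℒ.map (fun v => (Y v, v)) = μ.map (fun u => (u, X u))) :
    ∀ᵐ v ∂ℒ, X (Y v) = v := by
  have hG : MeasurableSet {p : β × α | X p.1 = p.2} :=
    measurableSet_eq_fun (hX.comp measurable_fst) measurable_snd
  have hπ : ∀ᵐ p ∂(μ.map fun u => (u, X u)), X p.1 = p.2 :=
    (ae_map_iff (measurable_id'.prodMk hX).aemeasurable hG).2 (ae_of_all _ fun _ => rfl)
  rwa [← h, ae_map_iff (hY.prodMk measurable_id').aemeasurable hG] at hπ

theorem map_prodMk_swap_eq_of_map_prodMk_eq (hX : Measurable X) (hY : Measurable Y)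
    (h : ℒ.map (fun v => (Y v, v)) = μ.map (fun u => (u, X u))) :
    μ.map (fun u => (X u, u)) = ℒ.map (fun v => (v, Y v)) := by
  have := congrArg (Measure.map Prod.swap) h
  rw [Measure.map_map measurable_swap (hY.prodMk measurable_id'),
    Measure.map_map measurable_swap (measurable_id'.prodMk hX)] at this
  exact this.symm

theorem map_eq_of_map_prodMk_eq (hX : Measurable X) (hY : Measurable Y)
    (h : ℒ.map (fun v => (Y v, v)) = μ.map (fun u => (u, X u))) : ℒ.map Y = μ := by
  have := congrArg (Measure.map Prod.fst) h
  rwa [Measure.map_map measurable_fst (hY.prodMk measurable_id'),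
    Measure.map_map measurable_fst (measurable_id'.prodMk hX), Function.comp_def,
    Function.comp_def, Measure.map_id'] at this

end Graph

theorem lintegral_ofReal_mul_eq_of_integral_mul_eq {α : Type*} [TopologicalSpace α]
    [MeasurableSpace α] [OpensMeasurableSpace α] {ℒ : Measure α} [IsFiniteMeasureOnCompacts ℒ]
    {ρ : α → ℝ} (hρ : Measurable ρ) (hρ0 : ∀ x, 0 ≤ ρ x)
    [IsFiniteMeasureOnCompacts (ℒ.withDensity fun x => ENNReal.ofReal (ρ x))]
    {X Y : α → α} (hX : Measurable X) (hY : Measurable Y) {φ ψ : α → ℝ}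
    (hφ : Continuous φ ∧ HasCompactSupport φ ∧ ∀ x, 0 ≤ φ x)
    (hψ : Continuous ψ ∧ HasCompactSupport ψ ∧ ∀ x, 0 ≤ ψ x)
    (h : ∫ x, φ (Y x) * ψ x ∂ℒ = ∫ x, φ x * ψ (X x) * ρ x ∂ℒ) :
    ∫⁻ x, ENNReal.ofReal (φ (Y x)) * ENNReal.ofReal (ψ x) ∂ℒ
      = ∫⁻ x, ENNReal.ofReal (φ x) * ENNReal.ofReal (ψ (X x))
          ∂ℒ.withDensity fun x => ENNReal.ofReal (ρ x) := by
  obtain ⟨hφc, hφs, hφ0⟩ := hφ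
  obtain ⟨hψc, hψs, hψ0⟩ := hψ
  obtain ⟨Cφ, hCφ⟩ := hφc.bddAbove_range_of_hasCompactSupport hφs
  obtain ⟨Cψ, hCψ⟩ := hψc.bddAbove_range_of_hasCompactSupport hψs
  have hL : ∫⁻ x, ENNReal.ofReal (φ (Y x)) * ENNReal.ofReal (ψ x) ∂ℒ < ∞ := by
    simpa only [mul_comm] using
      lintegral_ofReal_mul_lt_top (μ := ℒ) hψc hψs fun x => hCφ (mem_range_self (Y x))
  have hR : ∫⁻ x, ENNReal.ofReal (φ x) * ENNReal.ofReal (ψ (X x))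
      ∂ℒ.withDensity (fun x => ENNReal.ofReal (ρ x)) < ∞ :=
    lintegral_ofReal_mul_lt_top hφc hφs fun x => hCψ (mem_range_self (X x))
  have eL : ∫ x, φ (Y x) * ψ x ∂ℒ
      = (∫⁻ x, ENNReal.ofReal (φ (Y x)) * ENNReal.ofReal (ψ x) ∂ℒ).toReal := by
    rw [integral_eq_lintegral_of_nonneg_ae (ae_of_all _ fun x => mul_nonneg (hφ0 _) (hψ0 x))
      (by fun_prop : Measurable fun x => φ (Y x) * ψ x).aestronglyMeasurable]
    simp_rw [ENNReal.ofReal_mul (hφ0 _)]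
  have eR : ∫ x, φ x * ψ (X x) * ρ x ∂ℒ
      = (∫⁻ x, ENNReal.ofReal (φ x) * ENNReal.ofReal (ψ (X x))
          ∂ℒ.withDensity (fun x => ENNReal.ofReal (ρ x))).toReal := by
    rw [integral_eq_lintegral_of_nonneg_ae
      (ae_of_all _ fun x => mul_nonneg (mul_nonneg (hφ0 x) (hψ0 _)) (hρ0 x))
      (by fun_prop : Measurable fun x => φ x * ψ (X x) * ρ x).aestronglyMeasurable,
      lintegral_withDensity_eq_lintegral_mul _ (by fun_prop) (by fun_prop)]
    simp_rw [ENNReal.ofReal_mul (mul_nonneg (hφ0 _) (hψ0 _)), ENNReal.ofReal_mul (hφ0 _),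
      Pi.mul_apply, mul_comm]
  rwa [eL, eR, ENNReal.toReal_eq_toReal_iff' hL.ne hR.ne] at h

theorem stmt1_general {d : ℕ}
    (X Y : EuclideanSpace ℝ (Fin d) → EuclideanSpace ℝ (Fin d))
    (hX : Measurable X) (hY : Measurable Y)
    (ρ : EuclideanSpace ℝ (Fin d) → ℝ) (hρmeas : Measurable ρ) (hρpos : ∀ x, 0 < ρ x)
    (hρloc : LocallyIntegrable ρ (volume : Measure (EuclideanSpace ℝ (Fin d))))
    (𝒞 : Set (EuclideanSpace ℝ (Fin d) → ℝ))
    (h𝒞sub : ∀ φ ∈ 𝒞, Continuous φ ∧ HasCompactSupport φ ∧ ∀ x, 0 ≤ φ x)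
    (h𝒞dense : ∀ φ : EuclideanSpace ℝ (Fin d) → ℝ,
      Continuous φ → HasCompactSupport φ → (∀ x, 0 ≤ φ x) →
      ∀ ε > 0, ∃ ψ ∈ 𝒞, ∀ x, |φ x - ψ x| ≤ ε)
    (hEq : ∀ φ ∈ 𝒞, ∀ ψ ∈ 𝒞, ∫ x, φ (Y x) * ψ x = ∫ x, φ x * ψ (X x) * ρ x) :
    (∀ᵐ x ∂(volume : Measure (EuclideanSpace ℝ (Fin d))), X (Y x) = x ∧ Y (X x) = x) ∧
    (∀ φ : EuclideanSpace ℝ (Fin d) → ℝ≥0∞, Measurable φ →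
      ∫⁻ x, φ (Y x) = ∫⁻ x, φ x * ENNReal.ofReal (ρ x)) := by
  set μ := volume.withDensity fun x => ENNReal.ofReal (ρ x)
  have : IsLocallyFiniteMeasure μ := hρloc.isLocallyFiniteMeasure_withDensity_ofReal
  have hπ := map_prodMk_eq_of_uniformlyDense hX hY h𝒞sub h𝒞dense fun φ hφ ψ hψ =>
    lintegral_ofReal_mul_eq_of_integral_mul_eq hρmeas (fun x => (hρpos x).le) hX hY
      (h𝒞sub φ hφ) (h𝒞sub ψ hψ) (hEq φ hφ ψ hψ)
  have hac : volume ≪ μ := withDensity_absolutelyContinuous' hρmeas.ennreal_ofReal.aemeasurable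
    (ae_of_all _ fun x => (ENNReal.ofReal_pos.2 (hρpos x)).ne')
  refine ⟨?_, fun φ hφ => ?_⟩
  · filter_upwards [ae_apply_apply_eq_of_map_prodMk_eq hX hY hπ, hac.ae_le
      (ae_apply_apply_eq_of_map_prodMk_eq hY hX (map_prodMk_swap_eq_of_map_prodMk_eq hX hY hπ))]
      with x hXY hYX using ⟨hXY, hYX⟩
  · rw [← lintegral_map hφ hY, map_eq_of_map_prodMk_eq hX hY hπ,
      lintegral_withDensity_eq_lintegral_mul _ hρmeas.ennreal_ofReal hφ]
    simp only [Pi.mul_apply, mul_comm]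

/-- If `X, Y : ℝ^d → ℝ^d` are Borel measurable, `ρ > 0` is Borel measurable and
locally integrable, and `∫ φ(Y x) ψ x dx = ∫ φ x ψ(X x) ρ x dx` for all `φ, ψ` in a countable
subset `𝒞` of the nonnegative continuous compactly supported functions which is dense in that set
for the uniform norm, then `X ∘ Y = id` and `Y ∘ X = id` Lebesgue-a.e., and the image of Lebesgue
measure under `Y` is `ρ·ℒ`. -/
theorem stmt1 {d : ℕ}
    (X Y : EuclideanSpace ℝ (Fin d) → EuclideanSpace ℝ (Fin d))
    (hX : Measurable X) (hY : Measurable Y)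
    (ρ : EuclideanSpace ℝ (Fin d) → ℝ) (hρmeas : Measurable ρ) (hρpos : ∀ x, 0 < ρ x)
    (hρloc : LocallyIntegrable ρ (volume : Measure (EuclideanSpace ℝ (Fin d))))
    (𝒞 : Set (EuclideanSpace ℝ (Fin d) → ℝ)) (h𝒞count : 𝒞.Countable)
    (h𝒞sub : ∀ φ ∈ 𝒞, Continuous φ ∧ HasCompactSupport φ ∧ ∀ x, 0 ≤ φ x)
    (h𝒞dense : ∀ φ : EuclideanSpace ℝ (Fin d) → ℝ,
      Continuous φ → HasCompactSupport φ → (∀ x, 0 ≤ φ x) →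
      ∀ ε > 0, ∃ ψ ∈ 𝒞, ∀ x, |φ x - ψ x| ≤ ε)
    (hEq : ∀ φ ∈ 𝒞, ∀ ψ ∈ 𝒞, ∫ x, φ (Y x) * ψ x = ∫ x, φ x * ψ (X x) * ρ x) :
    (∀ᵐ x ∂(volume : Measure (EuclideanSpace ℝ (Fin d))), X (Y x) = x ∧ Y (X x) = x) ∧
    (∀ φ : EuclideanSpace ℝ (Fin d) → ℝ≥0∞, Measurable φ →
      ∫⁻ x, φ (Y x) = ∫⁻ x, φ x * ENNReal.ofReal (ρ x)) :=
  stmt1_general X Y hX hY ρ hρmeas hρpos hρloc 𝒞 h𝒞sub h𝒞dense hEq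
end

section
/- Let 𝔹 be a separable and uniformly convex Banach space, T > 0, and (Ω,ℱ,P) a probability space. Let (u_n)_{n∈ℕ} be a sequence of measurable maps u_n : Ω → C([0,T];𝔹) with sup_n E[sup_{t∈[0,T]} ‖u_n(t)‖_𝔹] < ∞, and let u : Ω → C([0,T];𝔹) be measurable with E[sup_{t∈[0,T]} ‖u(t)‖_𝔹] < ∞. Assume that (i) for every φ in the dual space 𝔹*, lim_{n→∞} E[sup_{t∈[0,T]} |⟨φ, u_n(t) − u(t)⟩|] = 0, and (ii) lim_{n→∞} E[sup_{t∈[0,T]} |‖u_n(t)‖_𝔹 − ‖u(t)‖_𝔹|] = 0. Then sup_{t∈[0,T]} ‖u_n(t) − u(t)‖_𝔹 converges to zero in probability as n → ∞, i.e. for every ε > 0, P(sup_{t∈[0,T]} ‖u_n(t) − u(t)‖_𝔹 > ε) → 0. -/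
/-!
Uniform convexity gives the Kadec–Klee property: if `φ x_n → φ y` for every `φ` in a countable
norming family of functionals (which exists by separability) and `‖x_n‖ → ‖y‖`, then `x_n → y`.
Applied along the filter `atTop ×ˢ 𝓝 t`, it upgrades uniform convergence of the scalar paths
`φ ∘ f_n` and `‖f_n‖` on a compact interval to uniform convergence of the paths `f_n`.
The hypotheses are countably many `L¹` convergences, so every subsequence has a further
subsequence along which all of them hold almost surely, hence along which `u_n → u` uniformly
almost surely; this characterises convergence in probability.
-/

open MeasureTheory Filter Topology Set
open scoped ENNReal NNReal

theorem ContinuousMap.tendsto_nhds_iff_forall_tendsto_prod {K Y ι : Type*} [TopologicalSpace K]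
    [CompactSpace K] [UniformSpace Y] {l : Filter ι} {g : ι → C(K, Y)} {g₀ : C(K, Y)} :
    Tendsto g l (𝓝 g₀) ↔ ∀ x, Tendsto (fun y : ι × K => g y.1 y.2) (l ×ˢ 𝓝 x) (𝓝 (g₀ x)) := by
  rw [tendsto_iff_tendstoUniformly, ← tendstoLocallyUniformly_iff_tendstoUniformly_of_compactSpace,
    tendstoLocallyUniformly_iff_forall_tendsto]
  refine forall_congr' fun x => ⟨fun h => ?_, fun h => ?_⟩
  · exact ((g₀.continuous.tendsto x).comp tendsto_snd).congr_uniformity h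
  · exact (((g₀.continuous.tendsto x).comp tendsto_snd).prodMk_nhds h).mono_right
      (nhds_le_uniformity _)

structure IsNormingSeq {E : Type*} [SeminormedAddCommGroup E] [NormedSpace ℝ E]
    (φ : ℕ → StrongDual ℝ E) : Prop where
  norm_le_one : ∀ k, ‖φ k‖ ≤ 1
  exists_lt_apply : ∀ x : E, ∀ c < ‖x‖, ∃ k, c < φ k x

section NormingSeq

variable {E : Type*} [NormedAddCommGroup E] [NormedSpace ℝ E]

theorem exists_isNormingSeq [TopologicalSpace.SeparableSpace E] :
    ∃ φ : ℕ → StrongDual ℝ E, IsNormingSeq φ := by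
  obtain ⟨d, hd⟩ := TopologicalSpace.exists_dense_seq E
  choose φ hφ_norm hφ_apply using fun k => exists_dual_vector'' ℝ (d k)
  refine ⟨φ, hφ_norm, fun x c hc => ?_⟩
  obtain ⟨k, hk⟩ := hd.exists_dist_lt x (half_pos (sub_pos.2 hc))
  refine ⟨k, ?_⟩
  have h_lip : |φ k x - φ k (d k)| ≤ ‖x - d k‖ := by
    rw [← map_sub]
    exact ((φ k).le_opNorm _).trans (mul_le_of_le_one_left (norm_nonneg _) (hφ_norm k))
  have h_tri := norm_sub_norm_le x (d k)
  rw [dist_eq_norm] at hk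
  simp only [hφ_apply, RCLike.ofReal_real_eq_id, id] at h_lip
  linarith [(abs_le.1 h_lip).1]

variable {φ : ℕ → StrongDual ℝ E} {ι : Type*} {l : Filter ι}

theorem IsNormingSeq.apply_le_norm (hφ : IsNormingSeq φ) (k : ℕ) (x : E) : φ k x ≤ ‖x‖ :=
  (le_abs_self _).trans <|
    ((φ k).le_opNorm x).trans (mul_le_of_le_one_left (norm_nonneg _) (hφ.norm_le_one k))

theorem IsNormingSeq.tendsto_of_norm_le_one [UniformConvexSpace E] (hφ : IsNormingSeq φ)
    {a : ι → E} {b : E} (ha : ∀ᶠ i in l, ‖a i‖ ≤ 1) (hb : ‖b‖ = 1)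
    (hw : ∀ k, Tendsto (fun i => φ k (a i)) l (𝓝 (φ k b))) : Tendsto a l (𝓝 b) := by
  refine Metric.tendsto_nhds.2 fun ε hε => ?_
  obtain ⟨δ, hδ, hconv⟩ := exists_forall_closed_ball_dist_add_le_two_sub E hε
  obtain ⟨k, hk⟩ := hφ.exists_lt_apply b (1 - δ / 2) (by linarith)
  filter_upwards [ha, (hw k).eventually (lt_mem_nhds hk)] with i hai hki
  -- `φ k (a i + b)` is close to `2`, so `a i + b` is too long for `a i` and `b` to be `ε` apart
  have hsum : 2 - δ < ‖a i + b‖ := by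
    have := hφ.apply_le_norm k (a i + b)
    rw [map_add] at this
    linarith
  rw [dist_eq_norm]
  by_contra! hfar
  linarith [hconv hai hb.le hfar]

/-- The Kadec–Klee property of uniformly convex spaces. -/
theorem IsNormingSeq.tendsto_of_tendsto_norm [UniformConvexSpace E] (hφ : IsNormingSeq φ)
    {x : ι → E} {y : E} (hw : ∀ k, Tendsto (fun i => φ k (x i)) l (𝓝 (φ k y)))
    (hn : Tendsto (fun i => ‖x i‖) l (𝓝 ‖y‖)) : Tendsto x l (𝓝 y) := by
  rcases eq_or_ne y 0 with rfl | hy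
  · exact tendsto_zero_iff_norm_tendsto_zero.2 (by simpa using hn)
  have hr : 0 < ‖y‖ := norm_pos_iff.2 hy
  have hinv : Tendsto (fun i => ‖x i‖⁻¹) l (𝓝 ‖y‖⁻¹) := hn.inv₀ hr.ne'
  have hunit : Tendsto (fun i => ‖x i‖⁻¹ • x i) l (𝓝 (‖y‖⁻¹ • y)) := by
    refine hφ.tendsto_of_norm_le_one (Eventually.of_forall fun i => ?_) ?_ fun k => ?_
    · rw [norm_smul, norm_inv, norm_norm]
      exact inv_mul_le_one_of_le₀ le_rfl (norm_nonneg _)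
    · rw [norm_smul, norm_inv, norm_norm, inv_mul_cancel₀ hr.ne']
    · simpa only [map_smul, smul_eq_mul] using hinv.mul (hw k)
  have hrescale : ∀ᶠ i in l, ‖x i‖ • (‖x i‖⁻¹ • x i) = x i := by
    filter_upwards [hn.eventually (lt_mem_nhds hr)] with i hi
    rw [smul_inv_smul₀ hi.ne']
  simpa only [smul_inv_smul₀ hr.ne'] using (hn.smul hunit).congr' hrescale

theorem IsNormingSeq.continuousMap_tendsto [UniformConvexSpace E] {K : Type*}
    [TopologicalSpace K] [CompactSpace K] (hφ : IsNormingSeq φ) {f : ι → C(K, E)}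
    {f₀ : C(K, E)} (hw : ∀ k, Tendsto (fun i => (φ k : C(E, ℝ)).comp (f i)) l
      (𝓝 ((φ k : C(E, ℝ)).comp f₀)))
    (hn : Tendsto (fun i => (⟨(‖·‖), continuous_norm⟩ : C(E, ℝ)).comp (f i)) l
      (𝓝 ((⟨(‖·‖), continuous_norm⟩ : C(E, ℝ)).comp f₀))) :
    Tendsto f l (𝓝 f₀) := by
  simp only [ContinuousMap.tendsto_nhds_iff_forall_tendsto_prod] at hw hn ⊢
  exact fun x => hφ.tendsto_of_tendsto_norm (fun k => hw k x) (hn x)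

end NormingSeq

theorem ae_tendsto_zero_of_tsum_lintegral_ne_top {Ω : Type*} [MeasurableSpace Ω] {μ : Measure Ω}
    {G : ℕ → Ω → ℝ≥0∞} (hG : ∀ i, AEMeasurable (G i) μ) (h : ∑' i, ∫⁻ ω, G i ω ∂μ ≠ ∞) :
    ∀ᵐ ω ∂μ, Tendsto (fun i => G i ω) atTop (𝓝 0) := by
  rw [← lintegral_tsum hG] at h
  filter_upwards [ae_lt_top' (AEMeasurable.tsum hG) h] with ω hω
  exact ENNReal.tendsto_atTop_zero_of_tsum_ne_top hω.ne

theorem exists_strictMono_ae_tendsto_zero_of_tendsto_lintegral {Ω ι : Type*} [MeasurableSpace Ω]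
    {μ : Measure Ω} [Countable ι] {F : ι → ℕ → Ω → ℝ≥0∞} (hF : ∀ k n, AEMeasurable (F k n) μ)
    (h : ∀ k, Tendsto (fun n => ∫⁻ ω, F k n ω ∂μ) atTop (𝓝 0)) :
    ∃ ms : ℕ → ℕ, StrictMono ms ∧ ∀ᵐ ω ∂μ, ∀ k, Tendsto (fun i => F k (ms i) ω) atTop (𝓝 0) := by
  rcases isEmpty_or_nonempty ι with hι | hι
  · exact ⟨id, strictMono_id, ae_of_all _ fun _ k => isEmptyElim k⟩
  obtain ⟨e, he⟩ := exists_surjective_nat ι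
  obtain ⟨ms, hms, hsmall⟩ : ∃ ms : ℕ → ℕ, StrictMono ms ∧
      ∀ i, ∀ j ∈ Iic i, ∫⁻ ω, F (e j) (ms i) ω ∂μ < 2⁻¹ ^ i :=
    extraction_forall_of_eventually fun i => (eventually_all_finite (finite_Iic i)).2
      fun j _ => (h (e j)).eventually_lt_const (ENNReal.pow_pos (by simp) i)
  refine ⟨ms, hms, ae_all_iff.2 fun k => ?_⟩
  obtain ⟨j, rfl⟩ := he k
  have htail : ∑' i, ∫⁻ ω, F (e j) (ms (i + j)) ω ∂μ ≠ ∞ := by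
    refine ne_top_of_le_ne_top ?_ (ENNReal.tsum_le_tsum fun i =>
      (hsmall (i + j) j (by simp)).le.trans
        (pow_le_pow_of_le_one zero_le (by norm_num) (Nat.le_add_right i j)))
    rw [ENNReal.tsum_geometric, ENNReal.one_sub_inv_two, inv_inv]
    exact ENNReal.ofNat_ne_top
  filter_upwards [ae_tendsto_zero_of_tsum_lintegral_ne_top (fun i => hF _ _) htail] with ω hω
  exact (tendsto_add_atTop_iff_nat j).1 hω

theorem stmt4_general {B : Type*} [NormedAddCommGroup B] [NormedSpace ℝ B]
    [UniformConvexSpace B] [TopologicalSpace.SeparableSpace B]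
    {Ω : Type*} [MeasurableSpace Ω] (P : Measure Ω) [IsProbabilityMeasure P]
    (T : ℝ)
    (un : ℕ → Ω → C(Set.Icc (0 : ℝ) T, B)) (u : Ω → C(Set.Icc (0 : ℝ) T, B))
    (hunmeas : ∀ n, @Measurable Ω C(Set.Icc (0 : ℝ) T, B) _
      (borel C(Set.Icc (0 : ℝ) T, B)) (un n))
    (humeas : @Measurable Ω C(Set.Icc (0 : ℝ) T, B) _
      (borel C(Set.Icc (0 : ℝ) T, B)) u)
    (hweak : ∀ φ : StrongDual ℝ B,
      Tendsto (fun n => ∫⁻ ω,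
        ENNReal.ofReal (⨆ t : Set.Icc (0 : ℝ) T, |φ (un n ω t) - φ (u ω t)|) ∂P)
        atTop (𝓝 0))
    (hnorm : Tendsto (fun n => ∫⁻ ω,
        ENNReal.ofReal (⨆ t : Set.Icc (0 : ℝ) T, |‖un n ω t‖ - ‖u ω t‖|) ∂P)
        atTop (𝓝 0)) :
    ∀ ε > (0 : ℝ),
      Tendsto (fun n => P {ω | ε < ⨆ t : Set.Icc (0 : ℝ) T, ‖un n ω t - u ω t‖})
        atTop (𝓝 0) := by
  let _ : MeasurableSpace C(Icc (0 : ℝ) T, B) := borel _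
  have : BorelSpace C(Icc (0 : ℝ) T, B) := ⟨rfl⟩
  obtain ⟨φ, hφ⟩ := exists_isNormingSeq (E := B)
  let ψ : Option ℕ → C(B, ℝ) := fun o => o.elim ⟨(‖·‖), continuous_norm⟩ fun k => φ k
  have hψ : ∀ o, Tendsto (fun n => ∫⁻ ω, edist ((ψ o).comp (un n ω)) ((ψ o).comp (u ω)) ∂P)
      atTop (𝓝 0) := by
    rintro (_ | k) <;>
      simp only [edist_dist, ContinuousMap.dist_eq_iSup, Real.dist_eq, ContinuousMap.comp_apply]
    exacts [hnorm, hweak (φ k)]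
  have hψ_meas : ∀ o n, Measurable fun ω => edist ((ψ o).comp (un n ω)) ((ψ o).comp (u ω)) :=
    fun o n => Continuous.measurable2 (c := fun f g => edist ((ψ o).comp f) ((ψ o).comp g))
      (((ψ o).continuous_postcomp.comp continuous_fst).edist
      ((ψ o).continuous_postcomp.comp continuous_snd)) (hunmeas n) humeas
  have hconv : TendstoInMeasure P un atTop u := by
    rw [exists_seq_tendstoInMeasure_atTop_iff fun n => (hunmeas n).aestronglyMeasurable]
    intro ns hns
    obtain ⟨ms, hms, hae⟩ := exists_strictMono_ae_tendsto_zero_of_tendsto_lintegral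
      (fun o n => (hψ_meas o (ns n)).aemeasurable) fun o => (hψ o).comp hns.tendsto_atTop
    refine ⟨ms, hms, hae.mono fun ω hω => ?_⟩
    exact hφ.continuousMap_tendsto (fun k => tendsto_iff_edist_tendsto_0.2 (hω (some k)))
      (tendsto_iff_edist_tendsto_0.2 (hω none))
  intro ε hε
  refine tendsto_of_tendsto_of_tendsto_of_le_of_le tendsto_const_nhds
    (tendstoInMeasure_iff_dist.1 hconv ε hε) (fun n => zero_le) fun n => measure_mono fun ω hω => ?_
  change ε ≤ dist _ _
  rw [ContinuousMap.dist_eq_iSup]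
  simpa only [dist_eq_norm] using hω.le

/-- Let `𝔹` be a separable uniformly convex Banach space and
`u_n, u : Ω → C([0,T];𝔹)` measurable with `sup_n E[sup_t ‖u_n(t)‖] < ∞` and
`E[sup_t ‖u(t)‖] < ∞`. If for every `φ ∈ 𝔹*`, `E[sup_t |⟨φ, u_n(t) − u(t)⟩|] → 0` and
`E[sup_t |‖u_n(t)‖ − ‖u(t)‖|] → 0`, then `sup_t ‖u_n(t) − u(t)‖ → 0` in probability. -/
theorem stmt4 {B : Type*} [NormedAddCommGroup B] [NormedSpace ℝ B]
    [UniformConvexSpace B] [CompleteSpace B] [TopologicalSpace.SeparableSpace B]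
    {Ω : Type*} [MeasurableSpace Ω] (P : Measure Ω) [IsProbabilityMeasure P]
    (T : ℝ) (hT : 0 < T)
    (un : ℕ → Ω → C(Set.Icc (0 : ℝ) T, B)) (u : Ω → C(Set.Icc (0 : ℝ) T, B))
    (hunmeas : ∀ n, @Measurable Ω C(Set.Icc (0 : ℝ) T, B) _
      (borel C(Set.Icc (0 : ℝ) T, B)) (un n))
    (humeas : @Measurable Ω C(Set.Icc (0 : ℝ) T, B) _
      (borel C(Set.Icc (0 : ℝ) T, B)) u)
    (hbdd : ∃ C : ℝ, ∀ n,
      ∫⁻ ω, ENNReal.ofReal (⨆ t : Set.Icc (0 : ℝ) T, ‖un n ω t‖) ∂P ≤ ENNReal.ofReal C)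
    (hubdd : ∫⁻ ω, ENNReal.ofReal (⨆ t : Set.Icc (0 : ℝ) T, ‖u ω t‖) ∂P ≠ ⊤)
    (hweak : ∀ φ : StrongDual ℝ B,
      Tendsto (fun n => ∫⁻ ω,
        ENNReal.ofReal (⨆ t : Set.Icc (0 : ℝ) T, |φ (un n ω t) - φ (u ω t)|) ∂P)
        atTop (𝓝 0))
    (hnorm : Tendsto (fun n => ∫⁻ ω,
        ENNReal.ofReal (⨆ t : Set.Icc (0 : ℝ) T, |‖un n ω t‖ - ‖u ω t‖|) ∂P)
        atTop (𝓝 0)) :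
    ∀ ε > (0 : ℝ),
      Tendsto (fun n => P {ω | ε < ⨆ t : Set.Icc (0 : ℝ) T, ‖un n ω t - u ω t‖})
        atTop (𝓝 0) :=
  stmt4_general P T un u hunmeas humeas hweak hnorm
end

section
/- Let 𝔹 be a uniformly convex Banach space, T > 0, and let v_n, v ∈ C([0,T];𝔹), n ∈ ℕ. Assume that (i) for every φ in the dual space 𝔹*, lim_{n→∞} sup_{t∈[0,T]} |⟨φ, v_n(t) − v(t)⟩| = 0, and (ii) lim_{n→∞} sup_{t∈[0,T]} |‖v_n(t)‖_𝔹 − ‖v(t)‖_𝔹| = 0. Then lim_{n→∞} sup_{t∈[0,T]} ‖v_n(t) − v(t)‖_𝔹 = 0. -/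
open Filter Topology Set

/-!
Fix a time `s` and let `x₀ = v s ≠ 0`, with a norming functional `φ` (`‖φ‖ = 1`, `φ x₀ = ‖x₀‖`).
If `b` is close to `x₀`, `‖a‖ ≈ ‖b‖` and `φ a ≈ φ b`, then `‖a + b‖ ≥ φ (a + b) ≈ 2 ‖x₀‖` while
`‖a‖, ‖b‖ ≲ ‖x₀‖`, so uniform convexity forces `‖a - b‖` to be small. By continuity of `v` this
gives uniform convergence on a neighbourhood of each `s`, and compactness of `[0, T]` makes it
global. The case `v s = 0` is immediate from the convergence of norms.
-/

section UniformConvergence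

variable {ι X α : Type*} [PseudoMetricSpace α] {F : ι → X → α} {f : X → α} {l : Filter ι}

theorem tendstoUniformly_of_tendsto_iSup_dist
    (hbdd : ∀ n, BddAbove (range fun t => dist (F n t) (f t)))
    (h : Tendsto (fun n => ⨆ t, dist (F n t) (f t)) l (𝓝 0)) : TendstoUniformly F f l := by
  refine Metric.tendstoUniformly_iff.2 fun ε hε => ?_
  filter_upwards [h.eventually (gt_mem_nhds hε)] with n hn t
  rw [dist_comm]
  exact (le_ciSup (hbdd n) t).trans_lt hn

theorem TendstoUniformly.tendsto_iSup_dist (h : TendstoUniformly F f l) :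
    Tendsto (fun n => ⨆ t, dist (F n t) (f t)) l (𝓝 0) := by
  refine Metric.tendsto_nhds.2 fun ε hε => ?_
  filter_upwards [Metric.tendstoUniformly_iff.1 h (ε / 2) (half_pos hε)] with n hn
  have hsup : ⨆ t, dist (F n t) (f t) ≤ ε / 2 :=
    Real.iSup_le (fun t => by rw [dist_comm]; exact (hn t).le) (half_pos hε).le
  rw [Real.dist_0_eq_abs, abs_of_nonneg (Real.iSup_nonneg fun _ => dist_nonneg)]
  linarith

end UniformConvergence

section UniformConvex

variable {E : Type*} [SeminormedAddCommGroup E] [NormedSpace ℝ E] [UniformConvexSpace E]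

theorem exists_forall_norm_add_le_two_sub_mul {ε : ℝ} (hε : 0 < ε) :
    ∃ δ > 0, ∀ ⦃R : ℝ⦄ ⦃x y : E⦄,
      ‖x‖ ≤ R → ‖y‖ ≤ R → ε * R ≤ ‖x - y‖ → ‖x + y‖ ≤ (2 - δ) * R := by
  obtain ⟨δ, hδ, h⟩ := exists_forall_closed_ball_dist_add_le_two_sub E hε
  refine ⟨δ, hδ, fun R x y hx hy hxy => ?_⟩
  rcases ((norm_nonneg x).trans hx).eq_or_lt with rfl | hR
  · have := norm_add_le x y
    linarith
  have hscale : ∀ z : E, ‖R⁻¹ • z‖ = ‖z‖ / R := fun z => by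
    rw [norm_smul_of_nonneg (inv_nonneg.2 hR.le), inv_mul_eq_div]
  have key := h (x := R⁻¹ • x) (y := R⁻¹ • y)
    (by rwa [hscale, div_le_one hR]) (by rwa [hscale, div_le_one hR])
    (by rwa [← smul_sub, hscale, le_div_iff₀ hR])
  rwa [← smul_add, hscale, div_le_iff₀ hR] at key

/-- A quantitative, localized form of the Radon–Riesz (Kadec–Klee) property. -/
theorem exists_forall_norm_sub_lt (x₀ : E) {ε : ℝ} (hε : 0 < ε) :
    ∃ φ : StrongDual ℝ E, ∃ κ > 0, ∀ a b : E,
      ‖b - x₀‖ < κ → |‖a‖ - ‖b‖| < κ → |φ a - φ b| < κ → ‖a - b‖ < ε := by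
  rcases eq_or_ne ‖x₀‖ 0 with h0 | h0
  · refine ⟨0, ε / 3, by positivity, fun a b hb hab _ => ?_⟩
    have := norm_sub_norm_le b x₀
    calc ‖a - b‖ ≤ ‖a‖ + ‖b‖ := norm_sub_le a b
      _ < ε := by linarith [(abs_lt.1 hab).2]
  obtain ⟨φ, hφ, hφx⟩ := exists_dual_vector ℝ x₀ h0
  set r := ‖x₀‖
  have hr : 0 < r := (norm_nonneg x₀).lt_of_ne' h0
  obtain ⟨δ, hδ, hconv⟩ := exists_forall_norm_add_le_two_sub_mul (E := E) (ε := ε / (2 * r))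
    (by positivity)
  -- `κ ≤ δ r / 8` puts the lower bound `2 r - 3 κ` on `‖a + b‖` above `(2 - δ) (r + 2 κ)`.
  set κ := min (δ * r / 8) (r / 2)
  have hκ : 0 < κ := by positivity
  refine ⟨φ, κ, hκ, fun a b hb hab hφab => ?_⟩
  have hφ_le : ∀ z, |φ z| ≤ ‖z‖ := fun z => by simpa [hφ] using φ.le_opNorm z
  have hb_le : ‖b‖ ≤ r + κ := by linarith [norm_sub_norm_le b x₀]
  have ha_le : ‖a‖ ≤ r + 2 * κ := by linarith [(abs_lt.1 hab).2]
  have hφb : r - κ ≤ φ b := by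
    have : φ b = φ x₀ + φ (b - x₀) := by rw [← map_add, add_sub_cancel]
    simp only [hφx, RCLike.ofReal_real_eq_id, id] at this
    linarith [(abs_le.1 (hφ_le (b - x₀))).1]
  have hsum : 2 * r - 3 * κ ≤ ‖a + b‖ := by
    have : φ (a + b) = (φ a - φ b) + 2 * φ b := by rw [map_add]; ring
    linarith [le_abs_self (φ (a + b)), hφ_le (a + b), (abs_lt.1 hφab).1]
  by_contra! hε_le
  have hεR : ε / (2 * r) * (r + 2 * κ) ≤ ‖a - b‖ :=
    calc ε / (2 * r) * (r + 2 * κ) ≤ ε / (2 * r) * (2 * r) := by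
          gcongr; linarith [min_le_right (δ * r / 8) (r / 2)]
      _ = ε := div_mul_cancel₀ ε (by positivity)
      _ ≤ ‖a - b‖ := hε_le
  have := hconv ha_le (by linarith) hεR
  nlinarith [mul_pos hδ hκ, min_le_left (δ * r / 8) (r / 2)]

theorem tendstoUniformly_of_tendstoUniformly_dual_of_norm {ι X : Type*} [TopologicalSpace X]
    [CompactSpace X] {F : ι → X → E} {f : X → E} {l : Filter ι} (hf : Continuous f)
    (hweak : ∀ φ : StrongDual ℝ E,
      TendstoUniformly (fun n t => φ (F n t)) (fun t => φ (f t)) l)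
    (hnorm : TendstoUniformly (fun n t => ‖F n t‖) (fun t => ‖f t‖) l) :
    TendstoUniformly F f l := by
  rw [← tendstoLocallyUniformly_iff_tendstoUniformly_of_compactSpace,
    Metric.tendstoLocallyUniformly_iff]
  intro ε hε s
  obtain ⟨φ, κ, hκ, hclose⟩ := exists_forall_norm_sub_lt (f s) hε
  refine ⟨f ⁻¹' Metric.ball (f s) κ, hf.continuousAt (Metric.ball_mem_nhds _ hκ), ?_⟩
  filter_upwards [Metric.tendstoUniformly_iff.1 hnorm κ hκ,
    Metric.tendstoUniformly_iff.1 (hweak φ) κ hκ] with n hn hw t ht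
  rw [dist_comm, dist_eq_norm]
  exact hclose _ _ (by rwa [← dist_eq_norm])
    (by rw [← Real.dist_eq, dist_comm]; exact hn t) (by rw [← Real.dist_eq, dist_comm]; exact hw t)

end UniformConvex

theorem stmt5_general {B : Type*} [NormedAddCommGroup B] [NormedSpace ℝ B]
    [UniformConvexSpace B]
    (T : ℝ)
    (vn : ℕ → C(Set.Icc (0 : ℝ) T, B)) (v : C(Set.Icc (0 : ℝ) T, B))
    (hweak : ∀ φ : StrongDual ℝ B,
      Tendsto (fun n => ⨆ t : Set.Icc (0 : ℝ) T, |φ (vn n t) - φ (v t)|) atTop (𝓝 0))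
    (hnorm : Tendsto (fun n => ⨆ t : Set.Icc (0 : ℝ) T, |‖vn n t‖ - ‖v t‖|) atTop (𝓝 0)) :
    Tendsto (fun n => ⨆ t : Set.Icc (0 : ℝ) T, ‖vn n t - v t‖) atTop (𝓝 0) := by
  have hweak' (φ : StrongDual ℝ B) :
      TendstoUniformly (fun n t => φ (vn n t)) (fun t => φ (v t)) atTop :=
    tendstoUniformly_of_tendsto_iSup_dist (fun _ => (isCompact_range (by fun_prop)).bddAbove)
      (by simpa only [Real.dist_eq] using hweak φ)
  have hnorm' : TendstoUniformly (fun n t => ‖vn n t‖) (fun t => ‖v t‖) atTop :=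
    tendstoUniformly_of_tendsto_iSup_dist (fun _ => (isCompact_range (by fun_prop)).bddAbove)
      (by simpa only [Real.dist_eq] using hnorm)
  simpa only [dist_eq_norm] using
    (tendstoUniformly_of_tendstoUniformly_dual_of_norm v.continuous hweak' hnorm').tendsto_iSup_dist

/-- In a uniformly convex Banach space `𝔹`, if `v_n, v ∈ C([0,T];𝔹)` satisfy
uniform-in-`t` weak convergence `⟨φ, v_n(t)⟩ → ⟨φ, v(t)⟩` for every `φ ∈ 𝔹*` and uniform-in-`t`
convergence of norms `‖v_n(t)‖ → ‖v(t)‖`, then `sup_{t∈[0,T]} ‖v_n(t) − v(t)‖ → 0`. -/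
theorem stmt5 {B : Type*} [NormedAddCommGroup B] [NormedSpace ℝ B]
    [UniformConvexSpace B] [CompleteSpace B]
    (T : ℝ) (hT : 0 < T)
    (vn : ℕ → C(Set.Icc (0 : ℝ) T, B)) (v : C(Set.Icc (0 : ℝ) T, B))
    (hweak : ∀ φ : StrongDual ℝ B,
      Tendsto (fun n => ⨆ t : Set.Icc (0 : ℝ) T, |φ (vn n t) - φ (v t)|) atTop (𝓝 0))
    (hnorm : Tendsto (fun n => ⨆ t : Set.Icc (0 : ℝ) T, |‖vn n t‖ - ‖v t‖|) atTop (𝓝 0)) :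
    Tendsto (fun n => ⨆ t : Set.Icc (0 : ℝ) T, ‖vn n t - v t‖) atTop (𝓝 0) :=
  stmt5_general T vn v hweak hnorm
end

section
/- Let f ∈ L¹_loc(ℝ^d) satisfy ∫_{B_{N+R}} |f(x)| log(|f(x)|+1) dx < ∞ for given N, R > 0. Then there exist constants C_{d,N} > 0 depending only on d and N, and C_d > 0 depending only on d, such that ∫_{B_N} M_R|f|(x) dx ≤ C_{d,N} + C_d ∫_{B_{N+R}} |f(x)| log(|f(x)|+1) dx. -/
open MeasureTheory Metric Set
open scoped ENNReal NNReal

/-- The local Hardy–Littlewood maximal function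
`M_R h(x) = sup_{0<r<R} (1/ℒ(B_r)) ∫_{B_r} h(x+y) dy`, for a `[0,∞]`-valued function `h`. -/
noncomputable def locMax {d : ℕ} (R : ℝ) (h : EuclideanSpace ℝ (Fin d) → ℝ≥0∞)
    (x : EuclideanSpace ℝ (Fin d)) : ℝ≥0∞ :=
  ⨆ r ∈ Set.Ioo (0 : ℝ) R,
    (volume (closedBall (0 : EuclideanSpace ℝ (Fin d)) r))⁻¹ *
      ∫⁻ y in closedBall (0 : EuclideanSpace ℝ (Fin d)) r, h (x + y)

/-!
Where `M_R|f| > 2^(n+1)`, it is the part of `|f|` above `2^n` that makes the averages large, so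
the Vitali covering lemma bounds the measure of that level set inside `B_N` by
`5^d 2^(-n) ∫_{B_{N+R}} |f| 1_{|f| > 2^n}`. Summing these bounds in the dyadic layer-cake
estimate `∫_{B_N} M ≤ 2|B_N| + Σ_n 2^(n+1) |{M > 2^(n+1)} ∩ B_N|` gives
`2|B_N| + 2·5^d ∫_{B_{N+R}} |f| · #{n | 2^n < |f|}`, and `#{n | 2^n < a} ≤ 2 log(a+1) / log 2`.
-/

lemma min_le_two_add_sum_two_pow (a : ℝ≥0∞) (m : ℕ) :
    min a (2 ^ (m + 1)) ≤
      2 + ∑ n ∈ Finset.range m, if 2 ^ (n + 1) < a then 2 ^ (n + 1) else 0 := by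
  induction m with
  | zero => simp
  | succ m ih =>
    rw [Finset.sum_range_succ, ← add_assoc]
    split_ifs with ha
    · calc min a (2 ^ (m + 2)) ≤ 2 ^ (m + 1) + 2 ^ (m + 1) := by
            rw [← two_mul, ← pow_succ']; exact min_le_right _ _
        _ = min a (2 ^ (m + 1)) + 2 ^ (m + 1) := by rw [min_eq_right ha.le]
        _ ≤ _ := by gcongr
    · have ha' := not_lt.1 ha
      have ha'' := ha'.trans (pow_le_pow_right₀ one_le_two m.succ.le_succ)
      calc min a (2 ^ (m + 1 + 1)) = min a (2 ^ (m + 1)) := by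
            rw [min_eq_left ha', min_eq_left ha'']
        _ ≤ _ := by rw [add_zero]; exact ih

lemma le_two_add_tsum_two_pow (a : ℝ≥0∞) :
    a ≤ 2 + ∑' n : ℕ, if 2 ^ (n + 1) < a then 2 ^ (n + 1) else 0 := by
  by_contra! hlt
  obtain ⟨m, hm⟩ := ENNReal.exists_nat_gt (hlt.trans_le le_top).ne
  have hpow : (m : ℝ≥0∞) < 2 ^ (m + 1) := by
    exact_mod_cast (Nat.lt_two_pow_self).trans (Nat.pow_lt_pow_succ one_lt_two)
  have : min a (2 ^ (m + 1)) ≤ 2 + ∑' n : ℕ, if 2 ^ (n + 1) < a then 2 ^ (n + 1) else 0 :=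
    (min_le_two_add_sum_two_pow a m).trans (by gcongr; exact ENNReal.sum_le_tsum _)
  exact (lt_min hlt (hm.trans hpow)).not_ge this

lemma lintegral_le_two_mul_measure_add_tsum {α : Type*} [MeasurableSpace α] (μ : Measure α)
    (F : α → ℝ≥0∞) :
    ∫⁻ x, F x ∂μ ≤ 2 * μ univ + ∑' n : ℕ, 2 ^ (n + 1) * μ {x | 2 ^ (n + 1) < F x} := by
  -- `F` need not be measurable, so integrate over measurable hulls of its level sets.
  set T : ℕ → Set α := fun n => toMeasurable μ {x | 2 ^ (n + 1) < F x}
  have hT : ∀ n, MeasurableSet (T n) := fun n => measurableSet_toMeasurable _ _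
  calc ∫⁻ x, F x ∂μ
      ≤ ∫⁻ x, 2 + ∑' n : ℕ, (T n).indicator (fun _ => 2 ^ (n + 1)) x ∂μ := by
        refine lintegral_mono fun x => (le_two_add_tsum_two_pow (F x)).trans ?_
        gcongr with n
        split_ifs with hx
        · exact (indicator_of_mem (subset_toMeasurable μ {x | 2 ^ (n + 1) < F x} hx)
            fun _ => (2 : ℝ≥0∞) ^ (n + 1)).ge
        · exact zero_le
    _ = 2 * μ univ + ∑' n : ℕ, 2 ^ (n + 1) * μ {x | 2 ^ (n + 1) < F x} := by
        rw [lintegral_add_left measurable_const, lintegral_const,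
          lintegral_tsum fun n => (measurable_const.indicator (hT n)).aemeasurable]
        congr 1
        exact tsum_congr fun n => by rw [lintegral_indicator_const (hT n), measure_toMeasurable]

lemma tsum_ite_two_pow_lt_le (a : ℝ) :
    ∑' n : ℕ, (if (2 : ℝ≥0∞) ^ n < ENNReal.ofReal a then ENNReal.ofReal a else 0) ≤
      ENNReal.ofReal (2 / Real.log 2) * ENNReal.ofReal (a * Real.log (a + 1)) := by
  have hpow : ∀ n : ℕ, (2 : ℝ≥0∞) ^ n = ENNReal.ofReal (2 ^ n) := fun n => by
    rw [ENNReal.ofReal_pow zero_le_two, ENNReal.ofReal_ofNat]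
  rcases le_or_gt a 1 with ha1 | ha1
  · refine (ENNReal.tsum_eq_zero.2 fun n => if_neg ?_).trans_le zero_le
    rw [hpow, not_lt]
    exact ENNReal.ofReal_le_ofReal (ha1.trans (one_le_pow₀ one_le_two))
  set L := Real.logb 2 (a + 1)
  have hL : 1 ≤ L := by
    rw [Real.le_logb_iff_rpow_le one_lt_two (by linarith), Real.rpow_one]
    linarith
  have hvanish : ∀ n ∉ Finset.range ⌈L⌉₊,
      (if (2 : ℝ≥0∞) ^ n < ENNReal.ofReal a then ENNReal.ofReal a else 0) = 0 := by
    intro n hn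
    rw [if_neg]
    rw [Finset.mem_range, Nat.lt_ceil, not_lt, Real.logb_le_iff_le_rpow one_lt_two (by linarith),
      Real.rpow_natCast] at hn
    rw [hpow, not_lt]
    exact ENNReal.ofReal_le_ofReal (by linarith)
  calc _ = ∑ n ∈ Finset.range ⌈L⌉₊,
        (if (2 : ℝ≥0∞) ^ n < ENNReal.ofReal a then ENNReal.ofReal a else 0) :=
          tsum_eq_sum hvanish
    _ ≤ ∑ _n ∈ Finset.range ⌈L⌉₊, ENNReal.ofReal a := by
        gcongr; split_ifs; exacts [le_rfl, zero_le]
    _ = ENNReal.ofReal (⌈L⌉₊ * a) := by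
        rw [Finset.sum_const, Finset.card_range, nsmul_eq_mul,
          ENNReal.ofReal_mul (by positivity), ENNReal.ofReal_natCast]
    _ ≤ ENNReal.ofReal (2 / Real.log 2 * (a * Real.log (a + 1))) := by
        refine ENNReal.ofReal_le_ofReal ?_
        have hceil : (⌈L⌉₊ : ℝ) ≤ 2 * L := by
          linarith [Nat.ceil_lt_add_one (zero_le_one.trans hL)]
        calc (⌈L⌉₊ : ℝ) * a ≤ 2 * L * a := by gcongr
          _ = _ := by simp only [L, ← Real.log_div_log]; ring
    _ = _ := ENNReal.ofReal_mul (by positivity)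

section Euclidean

variable {d : ℕ}

local notation "E" => EuclideanSpace ℝ (Fin d)

lemma setLIntegral_closedBall_zero_add (h : E → ℝ≥0∞) (x : E) (r : ℝ) :
    ∫⁻ y in closedBall (0 : E) r, h (x + y) = ∫⁻ z in closedBall x r, h z := by
  have hpre : (x + ·) ⁻¹' closedBall x r = closedBall (0 : E) r := by
    ext y
    simp [mem_closedBall, dist_eq_norm]
  rw [← hpre, (measurePreserving_add_left volume x).setLIntegral_comp_preimage_emb
    (MeasurableEquiv.addLeft x).measurableEmbedding]

lemma locMax_mono {R : ℝ} {h₁ h₂ : E → ℝ≥0∞} (h : h₁ ≤ h₂) :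
    locMax R h₁ ≤ locMax R h₂ :=
  fun _ => iSup₂_mono fun _ _ => mul_le_mul_right (lintegral_mono fun _ => h _) _

lemma locMax_add_const_le (R : ℝ) (h : E → ℝ≥0∞) (c : ℝ≥0∞) (x : E) :
    locMax R (fun y => h y + c) x ≤ locMax R h x + c := by
  refine iSup₂_le fun r hr => ?_
  have hV0 : volume (closedBall (0 : E) r) ≠ 0 := (measure_closedBall_pos volume _ hr.1).ne'
  rw [lintegral_add_right _ measurable_const, setLIntegral_const, mul_add, mul_comm c,
    ← mul_assoc, ENNReal.inv_mul_cancel hV0 measure_closedBall_lt_top.ne, one_mul]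
  gcongr
  exact le_iSup₂ (f := fun r (_ : r ∈ Ioo (0 : ℝ) R) =>
    (volume (closedBall (0 : E) r))⁻¹ * ∫⁻ y in closedBall (0 : E) r, h (x + y)) r hr

lemma lt_locMax_indicator_of_two_mul_lt {R : ℝ} {g : E → ℝ≥0∞} {s : ℝ≥0∞} (hs : s ≠ ⊤)
    {x : E} (hx : 2 * s < locMax R g x) : s < locMax R ({y | s < g y}.indicator g) x := by
  have hle : g ≤ fun y => {y | s < g y}.indicator g y + s := fun y => by
    by_cases hy : s < g y
    · simp [indicator_of_mem (show y ∈ {y | s < g y} from hy)]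
    · simpa [indicator_of_notMem (show y ∉ {y | s < g y} from hy)] using hy
  rw [← ENNReal.add_lt_add_iff_right hs, ← two_mul]
  exact hx.trans_le ((locMax_mono hle x).trans (locMax_add_const_le R _ s x))

lemma exists_lt_setLIntegral_of_lt_locMax {R : ℝ} {h : E → ℝ≥0∞} {t : ℝ≥0∞} {x : E}
    (hx : t < locMax R h x) :
    ∃ r ∈ Ioo 0 R, t * volume (closedBall x r) < ∫⁻ z in closedBall x r, h z := by
  simp only [locMax, lt_iSup_iff] at hx
  obtain ⟨r, hr, hlt⟩ := hx
  refine ⟨r, hr, ?_⟩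
  rw [Measure.addHaar_closedBall_center volume x, ← setLIntegral_closedBall_zero_add]
  exact ENNReal.mul_lt_of_lt_div (by rwa [ENNReal.div_eq_inv_mul])

lemma mul_volume_setOf_lt_locMax_inter_le (R N : ℝ) (h : E → ℝ≥0∞) (t : ℝ≥0∞) :
    t * volume ({x | t < locMax R h x} ∩ closedBall (0 : E) N) ≤
      5 ^ d * ∫⁻ z in closedBall (0 : E) (N + R), h z := by
  set S := {x | t < locMax R h x} ∩ closedBall (0 : E) N
  choose! r hrR hr using fun x (hx : x ∈ S) => exists_lt_setLIntegral_of_lt_locMax hx.1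
  obtain ⟨u, huS, hdisj, hcover⟩ :=
    Vitali.exists_disjoint_subfamily_covering_enlargement_closedBall S id r R
      (fun x hx => (hrR x hx).2.le) 5 (by norm_num)
  simp only [id_eq] at hdisj hcover
  have hu : u.Countable := hdisj.countable_of_nonempty_interior fun x hx =>
    ⟨x, ball_subset_interior_closedBall (mem_ball_self (hrR x (huS hx)).1)⟩
  have hball : ⋃ x ∈ u, closedBall x (r x) ⊆ closedBall (0 : E) (N + R) :=
    iUnion₂_subset fun x hx => closedBall_subset_closedBall' <| by
      linarith [(hrR x (huS hx)).2, mem_closedBall.1 (huS hx).2]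
  calc t * volume S ≤ t * ∑' x : u, volume (closedBall (x : E) (5 * r x)) := by
        refine mul_le_mul_right ((measure_mono (μ := volume) fun y hy => ?_).trans
          (measure_biUnion_le volume hu fun x => closedBall x (5 * r x))) _
        obtain ⟨x, hxu, hsub⟩ := hcover y hy
        exact mem_biUnion hxu (hsub (mem_closedBall_self (hrR y hy).1.le))
    _ = 5 ^ d * ∑' x : u, t * volume (closedBall (x : E) (r x)) := by
        rw [← ENNReal.tsum_mul_left, ← ENNReal.tsum_mul_left]
        refine tsum_congr fun x => ?_
        rw [Measure.addHaar_closedBall_mul volume (x : E) (by norm_num) (hrR x (huS x.2)).1.le,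
          finrank_euclideanSpace_fin, ENNReal.ofReal_pow (by norm_num), ENNReal.ofReal_ofNat,
          Measure.addHaar_closedBall_center volume (x : E)]
        ring
    _ ≤ 5 ^ d * ∑' x : u, ∫⁻ z in closedBall (x : E) (r x), h z := by
        gcongr with x
        exact (hr x (huS x.2)).le
    _ = 5 ^ d * ∫⁻ z in ⋃ x ∈ u, closedBall x (r x), h z := by
        rw [lintegral_biUnion hu (fun _ _ => measurableSet_closedBall) hdisj]
    _ ≤ 5 ^ d * ∫⁻ z in closedBall (0 : E) (N + R), h z := by
        gcongr

lemma two_mul_mul_volume_setOf_lt_locMax_inter_le (R N : ℝ) (g : E → ℝ≥0∞) {s : ℝ≥0∞}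
    (hs : s ≠ ⊤) :
    2 * s * volume ({x | 2 * s < locMax R g x} ∩ closedBall (0 : E) N) ≤
      2 * 5 ^ d * ∫⁻ z in closedBall (0 : E) (N + R), {y | s < g y}.indicator g z := by
  rw [mul_assoc, mul_assoc]
  gcongr 2 * ?_
  refine (mul_le_mul_right (measure_mono ?_) s).trans
    (mul_volume_setOf_lt_locMax_inter_le R N ({y | s < g y}.indicator g) s)
  exact fun x hx => ⟨lt_locMax_indicator_of_two_mul_lt hs hx.1, hx.2⟩

end Euclidean

/-- `L log L` bound for the local maximal function. There is a constant
`C_d > 0` depending only on `d` such that for every `N > 0` there is `C_{d,N} > 0` with: for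
every `R > 0` and every `f ∈ L¹_loc(ℝ^d)` with `∫_{B_{N+R}} |f| log(|f|+1) < ∞`,
`∫_{B_N} M_R|f| ≤ C_{d,N} + C_d ∫_{B_{N+R}} |f| log(|f|+1)`. -/
theorem stmt8 {d : ℕ} :
    ∃ Cd > (0 : ℝ), ∀ N > (0 : ℝ), ∃ CdN > (0 : ℝ), ∀ R > (0 : ℝ),
      ∀ f : EuclideanSpace ℝ (Fin d) → ℝ, Measurable f →
        LocallyIntegrable f (volume : Measure (EuclideanSpace ℝ (Fin d))) →
        (∫⁻ x in closedBall (0 : EuclideanSpace ℝ (Fin d)) (N + R),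
          ENNReal.ofReal (|f x| * Real.log (|f x| + 1)) ≠ ⊤) →
        ∫⁻ x in closedBall (0 : EuclideanSpace ℝ (Fin d)) N,
            locMax R (fun y => ENNReal.ofReal |f y|) x ≤
          ENNReal.ofReal CdN + ENNReal.ofReal Cd *
            ∫⁻ x in closedBall (0 : EuclideanSpace ℝ (Fin d)) (N + R),
              ENNReal.ofReal (|f x| * Real.log (|f x| + 1)) := by
  have hlog : 0 < Real.log 2 := Real.log_pos one_lt_two
  refine ⟨2 * 5 ^ d * (2 / Real.log 2), by positivity, fun N _ =>
    ⟨(2 * volume (closedBall (0 : EuclideanSpace ℝ (Fin d)) N)).toReal + 1, by positivity,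
      fun R _ f hf _ _ => ?_⟩⟩
  set B := closedBall (0 : EuclideanSpace ℝ (Fin d))
  set g := fun y => ENNReal.ofReal |f y|
  set Λ := fun z => ENNReal.ofReal (|f z| * Real.log (|f z| + 1))
  have hg : Measurable g := hf.abs.ennreal_ofReal
  calc ∫⁻ x in B N, locMax R g x
      ≤ 2 * volume (B N) +
          ∑' n : ℕ, 2 ^ (n + 1) * volume ({x | 2 ^ (n + 1) < locMax R g x} ∩ B N) := by
        simpa only [Measure.restrict_apply_univ,
          Measure.restrict_apply' (s := B N) measurableSet_closedBall, univ_inter]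
          using lintegral_le_two_mul_measure_add_tsum (volume.restrict (B N)) (locMax R g)
    _ ≤ 2 * volume (B N) +
          ∑' n : ℕ, 2 * 5 ^ d * ∫⁻ z in B (N + R), {y | 2 ^ n < g y}.indicator g z := by
        gcongr 2 * volume (B N) + ∑' n, ?_ with n
        rw [pow_succ']
        exact two_mul_mul_volume_setOf_lt_locMax_inter_le R N g
          (ENNReal.pow_ne_top ENNReal.ofNat_ne_top)
    _ = 2 * volume (B N) +
          2 * 5 ^ d * ∫⁻ z in B (N + R), ∑' n : ℕ, {y | 2 ^ n < g y}.indicator g z := by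
        rw [ENNReal.tsum_mul_left, lintegral_tsum fun n =>
          (hg.indicator (measurableSet_lt measurable_const hg)).aemeasurable]
    _ ≤ 2 * volume (B N) +
          2 * 5 ^ d * ∫⁻ z in B (N + R), ENNReal.ofReal (2 / Real.log 2) * Λ z := by
        gcongr with z
        simpa only [indicator_apply, mem_ofPred_eq] using tsum_ite_two_pow_lt_le |f z|
    _ = 2 * volume (B N) +
          ENNReal.ofReal (2 * 5 ^ d * (2 / Real.log 2)) * ∫⁻ z in B (N + R), Λ z := by
        rw [lintegral_const_mul' _ _ ENNReal.ofReal_ne_top, ← mul_assoc,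
          ENNReal.ofReal_mul (by positivity), ENNReal.ofReal_mul (by positivity),
          ENNReal.ofReal_pow (by norm_num), ENNReal.ofReal_ofNat, ENNReal.ofReal_ofNat]
    _ ≤ _ := by
        gcongr
        exact (ENNReal.le_ofReal_iff_toReal_le (ENNReal.mul_ne_top ENNReal.ofNat_ne_top
          measure_closedBall_lt_top.ne) (by positivity)).2 (le_add_of_nonneg_right zero_le_one)
end

section
/- Let (Ω,ℱ,P) be a probability space and let 𝒢 and 𝒜 be two independent sub-σ-algebras of ℱ. Let G : Ω×ℝ^d → ℝ be a bounded 𝒢⊗ℬ(ℝ^d)-measurable function and X : Ω×ℝ^d → ℝ^d an 𝒜⊗ℬ(ℝ^d)-measurable mapping. Suppose that for P-almost every ω, the image of Lebesgue measure under X(ω,·) is absolutely continuous with respect to Lebesgue measure. Then for Lebesgue-almost every x ∈ ℝ^d, the conditional expectation satisfies E[ G(·, X(·,x)) | 𝒜 ](ω) = h(X(ω,x)) for P-almost every ω, where h(y) := E[G(·,y)]. -/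
/-!
For fixed `x`, `Y := X(·, x)` is `𝒜`-measurable, so this is the freezing lemma: if `G` is
`𝒢 ⊗ ℬ`-measurable and bounded and `Y` is `𝒜`-measurable, with `𝒢` independent of `𝒜`, then
`E[G(·, Y) | 𝒜] = h(Y)`. To check the defining property of the conditional expectation on
`s ∈ 𝒜`, integrate `1_s(ω') G(ω, Y ω')` along the diagonal: independence says that the law of
`ω ↦ (ω, ω)`, from `Ω` to `(Ω, 𝒢) × (Ω, 𝒜)`, is the product `P ⊗ P`, and Fubini evaluates the
integral against the product as `∫_s h(Y) dP`.
-/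

open MeasureTheory ProbabilityTheory

section Freezing

variable {Ω E : Type*} [NormedAddCommGroup E] [NormedSpace ℝ E]
  {m𝒢 m𝒜 mΩ : MeasurableSpace Ω} {P : Measure Ω} [IsFiniteMeasure P]

theorem ProbabilityTheory.IndepFun.integral_comp_eq_integral_integral {β γ : Type*}
    {mβ : MeasurableSpace β} {mγ : MeasurableSpace γ} {f : Ω → β} {g : Ω → γ}
    (hfg : IndepFun f g P) (hf : Measurable f) (hg : Measurable g) {Φ : β × γ → E}
    (hΦ : StronglyMeasurable Φ) (hΦint : Integrable Φ ((P.map f).prod (P.map g))) :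
    ∫ ω, Φ (f ω, g ω) ∂P = ∫ ω', ∫ ω, Φ (f ω, g ω') ∂P ∂P := by
  have hmap := (indepFun_iff_map_prod_eq_prod_map_map hf.aemeasurable hg.aemeasurable).1 hfg
  calc ∫ ω, Φ (f ω, g ω) ∂P = ∫ p, Φ p ∂(P.map fun ω => (f ω, g ω)) :=
        (integral_map (hf.prodMk hg).aemeasurable hΦ.aestronglyMeasurable).symm
    _ = ∫ y, ∫ x, Φ (x, y) ∂(P.map f) ∂(P.map g) := by rw [hmap, integral_prod_symm Φ hΦint]
    _ = ∫ y, ∫ ω, Φ (f ω, y) ∂P ∂(P.map g) := by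
        congr with y
        exact integral_map hf.aemeasurable
          (hΦ.comp_measurable measurable_prodMk_right).aestronglyMeasurable
    _ = ∫ ω', ∫ ω, Φ (f ω, g ω') ∂P ∂P :=
        integral_map hg.aemeasurable
          (hΦ.comp_measurable (hf.prodMap measurable_id)).integral_prod_left'.aestronglyMeasurable

theorem condExp_comp_ae_eq_integral_of_indep {α : Type*} [MeasurableSpace α]
    [CompleteSpace E] (h𝒢 : m𝒢 ≤ mΩ) (h𝒜 : m𝒜 ≤ mΩ) (hindep : Indep m𝒢 m𝒜 P)
    {G : Ω × α → E} (hG : StronglyMeasurable[m𝒢.prod ‹_›] G) {K : ℝ} (hGbdd : ∀ p, ‖G p‖ ≤ K)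
    {Y : Ω → α} (hY : Measurable[m𝒜] Y) :
    P[fun ω => G (ω, Y ω)|m𝒜] =ᵐ[P] fun ω => ∫ ω', G (ω', Y ω) ∂P := by
  have hGΩ : StronglyMeasurable G := hG.mono (sup_le_sup (MeasurableSpace.comap_mono h𝒢) le_rfl)
  have hg : StronglyMeasurable[m𝒜] fun ω => ∫ ω', G (ω', Y ω) ∂P :=
    hGΩ.integral_prod_left'.comp_measurable hY
  have hf_int : Integrable (fun ω => G (ω, Y ω)) P :=
    ⟨(hGΩ.comp_measurable (measurable_id.prodMk (hY.mono h𝒜 le_rfl))).aestronglyMeasurable,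
      .of_bounded (ae_of_all _ fun _ => hGbdd _)⟩
  have hg_int : Integrable (fun ω => ∫ ω', G (ω', Y ω) ∂P) P :=
    ⟨(hg.mono h𝒜).aestronglyMeasurable, .of_bounded (ae_of_all _ fun _ =>
      norm_integral_le_of_norm_le_const (ae_of_all _ fun _ => hGbdd _))⟩
  refine (ae_eq_condExp_of_forall_setIntegral_eq h𝒜 hf_int (fun s _ _ => hg_int.integrableOn)
    (fun s hs _ => ?_) hg.aestronglyMeasurable).symm
  have hid : @IndepFun Ω Ω Ω mΩ m𝒢 m𝒜 id id P :=
    (@IndepFun_iff_Indep Ω Ω Ω mΩ m𝒢 m𝒜 id id P).2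
      (by simpa only [MeasurableSpace.comap_id] using hindep)
  let Φ : Ω × Ω → E := (Prod.snd ⁻¹' s).indicator fun p => G (p.1, Y p.2)
  have hΦ : StronglyMeasurable[m𝒢.prod m𝒜] Φ :=
    (hG.comp_measurable (measurable_fst.prodMk (hY.comp measurable_snd))).indicator
      (measurable_snd hs)
  have hdiag := hid.integral_comp_eq_integral_integral (measurable_id'' h𝒢) (measurable_id'' h𝒜) hΦ
    ⟨hΦ.aestronglyMeasurable,
      .of_bounded (ae_of_all _ fun _ => (norm_indicator_le_norm_self _ _).trans (hGbdd _))⟩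
  have hinner : (fun ω' => ∫ ω, Φ (ω, ω') ∂P) = s.indicator fun ω => ∫ ω', G (ω', Y ω) ∂P := by
    ext ω'
    by_cases h : ω' ∈ s <;> simp [Φ, h]
  rw [← integral_indicator (h𝒜 _ hs), ← integral_indicator (h𝒜 _ hs), ← hinner]
  exact hdiag.symm

end Freezing

theorem stmt12_general {d : ℕ} {Ω : Type*} [mΩ : MeasurableSpace Ω]
    (P : Measure Ω) [IsProbabilityMeasure P]
    (m𝒢 m𝒜 : MeasurableSpace Ω) (h𝒢 : m𝒢 ≤ mΩ) (h𝒜 : m𝒜 ≤ mΩ)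
    (hindep : ProbabilityTheory.Indep m𝒢 m𝒜 P)
    (G : Ω × EuclideanSpace ℝ (Fin d) → ℝ)
    (hGmeas : Measurable[m𝒢.prod
      (inferInstance : MeasurableSpace (EuclideanSpace ℝ (Fin d)))] G)
    (K : ℝ) (hGbdd : ∀ p, |G p| ≤ K)
    (X : Ω × EuclideanSpace ℝ (Fin d) → EuclideanSpace ℝ (Fin d))
    (hXmeas : Measurable[m𝒜.prod
      (inferInstance : MeasurableSpace (EuclideanSpace ℝ (Fin d)))] X) :
    ∀ᵐ x ∂(volume : Measure (EuclideanSpace ℝ (Fin d))),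
      P[(fun ω => G (ω, X (ω, x)))|m𝒜] =ᵐ[P]
        fun ω => ∫ ω', G (ω', X (ω, x)) ∂P := by
  refine ae_of_all _ fun x => ?_
  exact condExp_comp_ae_eq_integral_of_indep h𝒢 h𝒜 hindep hGmeas.stronglyMeasurable
    (fun p => (Real.norm_eq_abs _).le.trans (hGbdd p)) (hXmeas.comp measurable_prodMk_right)

/-- Let `𝒢` and `𝒜` be independent sub-σ-algebras of a probability space
`(Ω,ℱ,P)`, `G : Ω×ℝ^d → ℝ` bounded and `𝒢⊗ℬ(ℝ^d)`-measurable, and `X : Ω×ℝ^d → ℝ^d`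
`𝒜⊗ℬ(ℝ^d)`-measurable such that for `P`-a.e. `ω` the image of Lebesgue measure under `X(ω,·)`
is absolutely continuous w.r.t. Lebesgue measure. Then for Lebesgue-a.e. `x`,
`E[G(·,X(·,x)) | 𝒜] = h(X(·,x))` `P`-a.s., where `h(y) := E[G(·,y)]`. -/
theorem stmt12 {d : ℕ} {Ω : Type*} [mΩ : MeasurableSpace Ω]
    (P : Measure Ω) [IsProbabilityMeasure P]
    (m𝒢 m𝒜 : MeasurableSpace Ω) (h𝒢 : m𝒢 ≤ mΩ) (h𝒜 : m𝒜 ≤ mΩ)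
    (hindep : ProbabilityTheory.Indep m𝒢 m𝒜 P)
    (G : Ω × EuclideanSpace ℝ (Fin d) → ℝ)
    (hGmeas : Measurable[m𝒢.prod
      (inferInstance : MeasurableSpace (EuclideanSpace ℝ (Fin d)))] G)
    (K : ℝ) (hGbdd : ∀ p, |G p| ≤ K)
    (X : Ω × EuclideanSpace ℝ (Fin d) → EuclideanSpace ℝ (Fin d))
    (hXmeas : Measurable[m𝒜.prod
      (inferInstance : MeasurableSpace (EuclideanSpace ℝ (Fin d)))] X)
    (habs : ∀ᵐ ω ∂P,
      (volume : Measure (EuclideanSpace ℝ (Fin d))).map (fun x => X (ω, x)) ≪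
        (volume : Measure (EuclideanSpace ℝ (Fin d)))) :
    ∀ᵐ x ∂(volume : Measure (EuclideanSpace ℝ (Fin d))),
      P[(fun ω => G (ω, X (ω, x)))|m𝒜] =ᵐ[P]
        fun ω => ∫ ω', G (ω', X (ω, x)) ∂P :=
  stmt12_general (mΩ := mΩ) P m𝒢 m𝒜 h𝒢 h𝒜 hindep G hGmeas K hGbdd X hXmeas
end

section
/- Let d ≥ 3, n ≥ 1 an integer, and β ≥ (4d² + 5d)/(d − 2). Define on ℝ^d the smooth functions b_n^i(x) = β x^i/(|x|² + 1/n) and σ_n^{il}(x) = x^i x^l/(|x|² + 1/n), for i, l = 1,…,d. Then div b_n(x) = Σ_i ∂_i b_n^i(x) = β(d−2)/(|x|²+1/n) + 2β/(n(|x|²+1/n)²), and for every x ∈ ℝ^d the following inequality holds: −div b_n(x) + (1/2) Σ_{i,j,l} ∂_i σ_n^{jl}(x) ∂_j σ_n^{il}(x) + Σ_{i,j,l} σ_n^{il}(x) ∂²_{ij} σ_n^{jl}(x) + Σ_l ( Σ_i ∂_i σ_n^{il}(x) )² ≤ 0. -/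
open MeasureTheory
open scoped BigOperators

/-- The partial derivative `∂_i f` on `ℝ^d`. -/
noncomputable def pd {d : ℕ} (i : Fin d) (f : EuclideanSpace ℝ (Fin d) → ℝ)
    (x : EuclideanSpace ℝ (Fin d)) : ℝ :=
  fderiv ℝ f x (EuclideanSpace.single i 1)

/-- The vector field `b_n^i(x) = β x^i/(|x|² + 1/n)`. -/
noncomputable def bFld (d n : ℕ) (β : ℝ) (i : Fin d) (x : EuclideanSpace ℝ (Fin d)) : ℝ :=
  β * x i / (‖x‖ ^ 2 + 1 / (n : ℝ))

/-- The matrix field `σ_n^{il}(x) = x^i x^l/(|x|² + 1/n)`. -/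
noncomputable def sFld (d n : ℕ) (i l : Fin d) (x : EuclideanSpace ℝ (Fin d)) : ℝ :=
  x i * x l / (‖x‖ ^ 2 + 1 / (n : ℝ))

/-! With `q = (|x|² + 1/n)⁻¹` and `r = |x|²` one has `∂_k q = -2 x_k q²`, so every derivative
of `b_n` and `σ_n` is a polynomial in the coordinates, `q` and Kronecker deltas, and contracting
the indices leaves a polynomial in `r` and `q`. The second-order term is best computed as
`Σ_j ∂_i ∂_j σ^{jl} = ∂_i (x_l φ)` with `φ = (d+1) q - 2 r q²`, the divergence of the column
`σ^{·l}`. The whole left-hand side then equals `q · G(r q)` for the cubic `G` of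
`cubic_nonpos`, and `G ≤ 0` on `[0, 1] ∋ r q` as soon as `β (d - 2) ≥ 4d² + 5d`. -/

open Finset

section PartialDerivative

variable {d : ℕ} {f g : EuclideanSpace ℝ (Fin d) → ℝ} {x : EuclideanSpace ℝ (Fin d)}

theorem pd_coord (i k : Fin d) :
    pd k (fun y => y i) x = if k = i then 1 else 0 := by
  simp [pd, (PiLp.hasFDerivAt_apply (𝕜 := ℝ) 2 x i).fderiv, eq_comm]

theorem differentiable_normSq :
    Differentiable ℝ (fun y : EuclideanSpace ℝ (Fin d) => ‖y‖ ^ 2) :=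
  (contDiff_norm_sq ℝ (n := 1)).differentiable one_ne_zero

theorem pd_normSq (k : Fin d) :
    pd k (fun y => ‖y‖ ^ 2) x = 2 * x k := by
  simp [pd, fderiv_norm_sq_apply, EuclideanSpace.inner_single_right]

theorem pd_mul (hf : DifferentiableAt ℝ f x) (hg : DifferentiableAt ℝ g x) (k : Fin d) :
    pd k (fun y => f y * g y) x = pd k f x * g x + f x * pd k g x := by
  simp [pd, fderiv_fun_mul hf hg]
  ring

theorem pd_sub (hf : DifferentiableAt ℝ f x) (hg : DifferentiableAt ℝ g x) (k : Fin d) :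
    pd k (fun y => f y - g y) x = pd k f x - pd k g x := by
  simp [pd, fderiv_fun_sub hf hg]

theorem pd_pow (hf : DifferentiableAt ℝ f x) (m : ℕ) (k : Fin d) :
    pd k (fun y => f y ^ m) x = m * f x ^ (m - 1) * pd k f x := by
  simp [pd, fderiv_fun_pow m hf]

theorem pd_const_mul (c : ℝ) (hf : DifferentiableAt ℝ f x) (k : Fin d) :
    pd k (fun y => c * f y) x = c * pd k f x := by
  simp [pd, fderiv_const_mul hf]

theorem pd_sum {ι : Type*} [Fintype ι] {F : ι → EuclideanSpace ℝ (Fin d) → ℝ}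
    (hF : ∀ j, DifferentiableAt ℝ (F j) x) (k : Fin d) :
    pd k (fun y => ∑ j, F j y) x = ∑ j, pd k (F j) x := by
  simp [pd, fderiv_fun_sum fun j _ => hF j]

theorem differentiable_pd (hf : ContDiff ℝ 2 f) (k : Fin d) : Differentiable ℝ (pd k f) :=
  ((hf.fderiv_right (m := 1) le_rfl).differentiable one_ne_zero).clm_apply
    (differentiable_const _)

end PartialDerivative

section Weight

variable {d : ℕ} {ε : ℝ}

noncomputable def regInvNormSq (ε : ℝ) (y : EuclideanSpace ℝ (Fin d)) : ℝ := (‖y‖ ^ 2 + ε)⁻¹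

theorem regInvNormSq_pos (hε : 0 < ε) (x : EuclideanSpace ℝ (Fin d)) :
    0 < regInvNormSq ε x := by
  unfold regInvNormSq; positivity

theorem contDiff_regInvNormSq (hε : 0 < ε) {m : WithTop ℕ∞} :
    ContDiff ℝ m (regInvNormSq (d := d) ε) :=
  ((contDiff_norm_sq ℝ).add contDiff_const).inv fun y => by positivity

theorem differentiable_regInvNormSq (hε : 0 < ε) :
    Differentiable ℝ (regInvNormSq (d := d) ε) :=
  (contDiff_regInvNormSq hε (m := 1)).differentiable one_ne_zero

theorem normSq_mul_regInvNormSq (hε : 0 < ε) (x : EuclideanSpace ℝ (Fin d)) :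
    ‖x‖ ^ 2 * regInvNormSq ε x = 1 - ε * regInvNormSq ε x := by
  have : ‖x‖ ^ 2 + ε ≠ 0 := by positivity
  unfold regInvNormSq; field_simp; ring

theorem pd_regInvNormSq (hε : 0 < ε) (k : Fin d) (x : EuclideanSpace ℝ (Fin d)) :
    pd k (regInvNormSq ε) x = -2 * x k * regInvNormSq ε x ^ 2 := by
  have hQ : HasFDerivAt (fun y : EuclideanSpace ℝ (Fin d) => ‖y‖ ^ 2 + ε) (2 • innerSL ℝ x) x :=
    (hasStrictFDerivAt_norm_sq x).hasFDerivAt.add_const ε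
  have h : HasFDerivAt (regInvNormSq ε) (-((‖x‖ ^ 2 + ε) ^ 2)⁻¹ • 2 • innerSL ℝ x) x :=
    (hasDerivAt_inv (by positivity : ‖x‖ ^ 2 + ε ≠ 0)).comp_hasFDerivAt x hQ
  rw [pd, h.fderiv]
  simp [regInvNormSq, EuclideanSpace.inner_single_right]
  ring

theorem pd_coord_mul_regInvNormSq (hε : 0 < ε) (l k : Fin d) (x : EuclideanSpace ℝ (Fin d)) :
    pd k (fun y => y l * regInvNormSq ε y) x =
      (if k = l then regInvNormSq ε x else 0) - 2 * x k * x l * regInvNormSq ε x ^ 2 := by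
  rw [pd_mul (by fun_prop) (differentiable_regInvNormSq hε x), pd_coord, pd_regInvNormSq hε]
  split_ifs <;> ring

end Weight

section Fields

variable {d n : ℕ}

theorem one_div_natCast_pos (hn : 0 < n) : (0 : ℝ) < 1 / n := by positivity

theorem sFld_eq (i l : Fin d) :
    sFld d n i l = fun y => y i * (y l * regInvNormSq (1 / n) y) := by
  funext y; rw [sFld, regInvNormSq, div_eq_mul_inv, mul_assoc]

theorem bFld_eq (β : ℝ) (i : Fin d) :
    bFld d n β i = fun y => β * (y i * regInvNormSq (1 / n) y) := by
  funext y; rw [bFld, regInvNormSq, div_eq_mul_inv, mul_assoc]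

theorem contDiff_sFld (hn : 0 < n) (i l : Fin d) {m : WithTop ℕ∞} :
    ContDiff ℝ m (sFld d n i l) := by
  have := contDiff_regInvNormSq (d := d) (one_div_natCast_pos hn) (m := m)
  rw [sFld_eq]; fun_prop

theorem pd_sFld (hn : 0 < n) (k i l : Fin d) (x : EuclideanSpace ℝ (Fin d)) :
    pd k (sFld d n i l) x =
      (if k = i then x l * regInvNormSq (1 / n) x else 0) +
        x i * ((if k = l then regInvNormSq (1 / n) x else 0) -
          2 * x k * x l * regInvNormSq (1 / n) x ^ 2) := by
  have := differentiable_regInvNormSq (d := d) (one_div_natCast_pos hn)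
  rw [sFld_eq, pd_mul (by fun_prop) (by fun_prop), pd_coord,
    pd_coord_mul_regInvNormSq (one_div_natCast_pos hn)]
  split_ifs <;> ring

theorem pd_bFld (hn : 0 < n) (β : ℝ) (k i : Fin d) (x : EuclideanSpace ℝ (Fin d)) :
    pd k (bFld d n β i) x =
      β * ((if k = i then regInvNormSq (1 / n) x else 0) -
        2 * x k * x i * regInvNormSq (1 / n) x ^ 2) := by
  have := differentiable_regInvNormSq (d := d) (one_div_natCast_pos hn)
  rw [bFld_eq, pd_const_mul β (by fun_prop), pd_coord_mul_regInvNormSq (one_div_natCast_pos hn)]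

theorem sum_pd_bFld (hn : 0 < n) (β : ℝ) (x : EuclideanSpace ℝ (Fin d)) :
    ∑ i, pd i (bFld d n β i) x =
      β * (d * regInvNormSq (1 / n) x - 2 * ‖x‖ ^ 2 * regInvNormSq (1 / n) x ^ 2) := by
  simp only [pd_bFld hn, if_true, EuclideanSpace.real_norm_sq_eq, ← mul_sum, sum_sub_distrib,
    sum_const, card_univ, Fintype.card_fin, nsmul_eq_mul]
  ring_nf
  simp only [← mul_sum, ← sum_mul]
  ring

theorem sum_pd_sFld (hn : 0 < n) (l : Fin d) :
    (fun y => ∑ i, pd i (sFld d n i l) y) = fun y => y l *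
      ((d + 1) * regInvNormSq (1 / n) y - 2 * ‖y‖ ^ 2 * regInvNormSq (1 / n) y ^ 2) := by
  funext y
  simp only [pd_sFld hn, if_true, sum_add_distrib, mul_sub, sum_sub_distrib, mul_ite, mul_zero,
    sum_ite_eq', mem_univ, EuclideanSpace.real_norm_sq_eq, sum_const, card_univ, Fintype.card_fin,
    nsmul_eq_mul]
  ring_nf
  simp only [← mul_sum, ← sum_mul]

theorem sum_pd_pd_sFld (hn : 0 < n) (i l : Fin d) (x : EuclideanSpace ℝ (Fin d)) :
    ∑ j, pd i (pd j (sFld d n j l)) x =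
      (if i = l then (d + 1) * regInvNormSq (1 / n) x - 2 * ‖x‖ ^ 2 * regInvNormSq (1 / n) x ^ 2
        else 0) +
      x i * x l * (8 * ‖x‖ ^ 2 * regInvNormSq (1 / n) x ^ 3 -
        2 * (d + 3) * regInvNormSq (1 / n) x ^ 2) := by
  have hq := differentiable_regInvNormSq (d := d) (one_div_natCast_pos hn)
  have hr := differentiable_normSq (d := d)
  rw [← pd_sum fun j => differentiable_pd (contDiff_sFld hn j l) j x, sum_pd_sFld hn,
    pd_mul (by fun_prop) (by fun_prop), pd_coord,
    pd_sub (by fun_prop) (((hr x).const_mul 2).fun_mul ((hq x).fun_pow 2)),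
    pd_const_mul _ (hq x), pd_mul ((hr x).const_mul 2) ((hq x).fun_pow 2), pd_const_mul _ (hr x),
    pd_pow (hq x), pd_normSq, pd_regInvNormSq (one_div_natCast_pos hn)]
  split_ifs <;> push_cast <;> ring

end Fields

section Contractions

variable {d n : ℕ}

theorem sum_pd_sFld_mul_pd_sFld (hn : 0 < n) (x : EuclideanSpace ℝ (Fin d)) :
    ∑ i, ∑ j, ∑ l, pd i (sFld d n j l) x * pd j (sFld d n i l) x =
      (d + 3) * ‖x‖ ^ 2 * regInvNormSq (1 / n) x ^ 2 -
        8 * (‖x‖ ^ 2) ^ 2 * regInvNormSq (1 / n) x ^ 3 +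
          4 * (‖x‖ ^ 2) ^ 3 * regInvNormSq (1 / n) x ^ 4 := by
  simp only [pd_sFld hn, EuclideanSpace.real_norm_sq_eq, mul_add, add_mul, mul_sub, sub_mul,
    mul_ite, ite_mul, mul_zero, zero_mul, sum_add_distrib, sum_sub_distrib, sum_ite_eq, sum_ite_eq',
    mem_univ, if_true, sum_ite_irrel, sum_const_zero]
  ring_nf
  simp only [← mul_sum, ← sum_mul, sum_const, card_univ, Fintype.card_fin, nsmul_eq_mul]
  ring_nf

theorem sum_sFld_mul_sum_pd_pd_sFld (hn : 0 < n) (x : EuclideanSpace ℝ (Fin d)) :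
    ∑ i, ∑ j, ∑ l, sFld d n i l x * pd i (pd j (sFld d n j l)) x =
      (d + 1) * ‖x‖ ^ 2 * regInvNormSq (1 / n) x ^ 2 -
        (2 * d + 8) * (‖x‖ ^ 2) ^ 2 * regInvNormSq (1 / n) x ^ 3 +
          8 * (‖x‖ ^ 2) ^ 3 * regInvNormSq (1 / n) x ^ 4 := by
  rw [sum_congr rfl fun i _ => sum_comm]
  simp only [← mul_sum, sum_pd_pd_sFld hn]
  simp only [sFld_eq, EuclideanSpace.real_norm_sq_eq, mul_add, mul_ite, mul_zero, sum_add_distrib,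
    sum_ite_eq, mem_univ, if_true]
  ring_nf
  simp only [sum_add_distrib, sum_sub_distrib, sum_neg_distrib, ← mul_sum, ← sum_mul]
  ring

theorem sum_sq_sum_pd_sFld (hn : 0 < n) (x : EuclideanSpace ℝ (Fin d)) :
    ∑ l, (∑ i, pd i (sFld d n i l) x) ^ 2 =
      ‖x‖ ^ 2 *
        ((d + 1) * regInvNormSq (1 / n) x - 2 * ‖x‖ ^ 2 * regInvNormSq (1 / n) x ^ 2) ^ 2 := by
  simp only [fun l => congrFun (sum_pd_sFld hn l) x, mul_pow, ← sum_mul,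
    EuclideanSpace.real_norm_sq_eq]

end Contractions

theorem cubic_nonpos {d β s : ℝ} (hd : 3 ≤ d) (hβ : (4 * d ^ 2 + 5 * d) / (d - 2) ≤ β)
    (hs₀ : 0 ≤ s) (hs₁ : s ≤ 1) :
    (2 * d ^ 2 + 7 * d + 7) / 2 * s - (6 * d + 16) * s ^ 2 + 14 * s ^ 3 - β * (d - 2 * s) ≤ 0 := by
  have hβ' : 4 * d ^ 2 + 5 * d ≤ β * (d - 2) := (div_le_iff₀ (by linarith)).1 hβ
  have hβ₀ : 0 ≤ β := by nlinarith
  have hs₃ : s ^ 3 ≤ 1 := pow_le_one₀ hs₀ hs₁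
  nlinarith [mul_nonneg hβ₀ (sub_nonneg.2 hs₁),
    mul_nonneg (by positivity : (0 : ℝ) ≤ 2 * d ^ 2 + 7 * d + 7) (sub_nonneg.2 hs₁),
    mul_nonneg (by linarith : (0 : ℝ) ≤ 6 * d + 16) (sq_nonneg s)]

/-- For `d ≥ 3`, `n ≥ 1` and `β ≥ (4d²+5d)/(d−2)`, with
`b_n^i(x) = βx^i/(|x|²+1/n)` and `σ_n^{il}(x) = x^i x^l/(|x|²+1/n)`, one has
`div b_n(x) = β(d−2)/(|x|²+1/n) + 2β/(n(|x|²+1/n)²)` and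
`−div b_n + ½ Σ ∂_iσ^{jl}∂_jσ^{il} + Σ σ^{il}∂²_{ij}σ^{jl} + Σ_l (Σ_i ∂_iσ^{il})² ≤ 0`. -/
theorem stmt13 (d n : ℕ) (hd : 3 ≤ d) (hn : 1 ≤ n) (β : ℝ)
    (hβ : (4 * (d : ℝ) ^ 2 + 5 * d) / ((d : ℝ) - 2) ≤ β) :
    (∀ x : EuclideanSpace ℝ (Fin d),
      ∑ i, pd i (bFld d n β i) x =
        β * ((d : ℝ) - 2) / (‖x‖ ^ 2 + 1 / (n : ℝ)) +
          2 * β / ((n : ℝ) * (‖x‖ ^ 2 + 1 / (n : ℝ)) ^ 2)) ∧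
    (∀ x : EuclideanSpace ℝ (Fin d),
      -(∑ i, pd i (bFld d n β i) x) +
        (1 / 2) * ∑ i, ∑ j, ∑ l, pd i (sFld d n j l) x * pd j (sFld d n i l) x +
        (∑ i, ∑ j, ∑ l, sFld d n i l x * pd i (pd j (sFld d n j l)) x) +
        (∑ l, (∑ i, pd i (sFld d n i l) x) ^ 2) ≤ 0) := by
  have hε := one_div_natCast_pos hn
  refine ⟨fun x => ?_, fun x => ?_⟩
  · have : ‖x‖ ^ 2 + 1 / (n : ℝ) ≠ 0 := by positivity
    rw [sum_pd_bFld hn, regInvNormSq]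
    field_simp
    ring
  · rw [sum_pd_bFld hn, sum_pd_sFld_mul_pd_sFld hn, sum_sFld_mul_sum_pd_pd_sFld hn,
      sum_sq_sum_pd_sFld hn]
    have hq := regInvNormSq_pos hε x
    have hs₁ : ‖x‖ ^ 2 * regInvNormSq (1 / n) x ≤ 1 := by
      rw [normSq_mul_regInvNormSq hε]; nlinarith
    have hG := cubic_nonpos (by exact_mod_cast hd) hβ
      (mul_nonneg (sq_nonneg ‖x‖) hq.le) hs₁
    linear_combination mul_nonpos_of_nonneg_of_nonpos hq.le hG
end

section
/- Let d ≥ 3 and n ≥ 1 an integer, and define σ_n^{il}(x) = x^i x^l/(|x|² + 1/n) on ℝ^d for i, l = 1,…,d. Then for every x ∈ ℝ^d and every l, Σ_i ∂_i σ_n^{il}(x) = ((d−1)|x|² + (d+1)/n) x^l / (|x|² + 1/n)², and consequently Σ_l ( Σ_i ∂_i σ_n^{il}(x) )² ≤ 4d² / (|x|² + 1/n). -/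
open MeasureTheory
open scoped BigOperators

/-! With `q = |x|² + c` (`c = 1/n` for `σ_n`), the quotient rule gives
`∂_i (x^i x^l / q) = ((x^l + δ_il x^i) q - 2 (x^i)² x^l) / q²`, and summing over `i` yields
`((d + 1) q - 2 |x|²) x^l / q² = ((d - 1)|x|² + (d + 1) c) x^l / q²`.
For `c > 0` and `d ≥ 1` the factor `(d - 1)|x|² + (d + 1) c` lies in `[0, 2 d q]`, and
`Σ_l (x^l)² = |x|² ≤ q`, which gives the bound `4 d² / q`. -/

variable {d : ℕ}

theorem pd_coord_mul_coord_div_normSq_add {c : ℝ} {x : EuclideanSpace ℝ (Fin d)}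
    (hx : ‖x‖ ^ 2 + c ≠ 0) (i l : Fin d) :
    pd i (fun y => y i * y l / (‖y‖ ^ 2 + c)) x =
      ((x l + if l = i then x i else 0) * (‖x‖ ^ 2 + c) - 2 * x i ^ 2 * x l) /
        (‖x‖ ^ 2 + c) ^ 2 := by
  have hcoord (j : Fin d) : HasFDerivAt (fun y : EuclideanSpace ℝ (Fin d) => y j)
      (EuclideanSpace.proj j : EuclideanSpace ℝ (Fin d) →L[ℝ] ℝ) x :=
    (EuclideanSpace.proj (𝕜 := ℝ) (ι := Fin d) j).hasFDerivAt
  have hden := (hasStrictFDerivAt_norm_sq x).hasFDerivAt.add_const c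
  have hquot := ((hcoord i).fun_mul (hcoord l)).fun_mul
    ((hasDerivAt_inv hx).comp_hasFDerivAt x hden)
  simp only [← div_eq_mul_inv, Function.comp_def] at hquot
  rw [pd, hquot.fderiv]
  simp only [add_apply, smul_apply, neg_apply, coe_innerSL_apply,
    EuclideanSpace.inner_single_right, PiLp.proj_apply, PiLp.single_apply, smul_eq_mul,
    nsmul_eq_mul, neg_smul, smul_neg, smul_add, Real.ringHom_apply, mul_ite, one_mul, mul_one,
    mul_zero]
  split_ifs with h
  · subst h
    field_simp
    ring
  · field_simp
    ring

theorem sum_pd_coord_mul_coord_div_normSq_add {c : ℝ} {x : EuclideanSpace ℝ (Fin d)}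
    (hx : ‖x‖ ^ 2 + c ≠ 0) (l : Fin d) :
    ∑ i, pd i (fun y => y i * y l / (‖y‖ ^ 2 + c)) x =
      (((d : ℝ) - 1) * ‖x‖ ^ 2 + ((d : ℝ) + 1) * c) * x l / (‖x‖ ^ 2 + c) ^ 2 := by
  simp only [pd_coord_mul_coord_div_normSq_add hx, ← Finset.sum_div, Finset.sum_sub_distrib,
    ← Finset.sum_mul, Finset.sum_add_distrib, Finset.sum_ite_eq, Finset.mem_univ, if_true,
    ← Finset.mul_sum, ← EuclideanSpace.real_norm_sq_eq, Finset.sum_const, Finset.card_univ,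
    Fintype.card_fin, nsmul_eq_mul]
  ring

theorem sum_sq_coord_mul_div_normSq_add_sq_le {c : ℝ} (hd : 1 ≤ d) (hc : 0 < c)
    (x : EuclideanSpace ℝ (Fin d)) :
    ∑ l, ((((d : ℝ) - 1) * ‖x‖ ^ 2 + ((d : ℝ) + 1) * c) * x l / (‖x‖ ^ 2 + c) ^ 2) ^ 2 ≤
      4 * (d : ℝ) ^ 2 / (‖x‖ ^ 2 + c) := by
  set q := ‖x‖ ^ 2 + c
  set A := ((d : ℝ) - 1) * ‖x‖ ^ 2 + ((d : ℝ) + 1) * c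
  have hd' : (1 : ℝ) ≤ d := by exact_mod_cast hd
  have hq : 0 < q := by positivity
  have hA : 0 ≤ A := by positivity
  have hAq : A ≤ 2 * d * q := by nlinarith [sq_nonneg ‖x‖]
  calc ∑ l, (A * x l / q ^ 2) ^ 2 = A ^ 2 * ‖x‖ ^ 2 / q ^ 4 := by
        simp only [div_pow, mul_pow, ← Finset.sum_div, ← Finset.mul_sum,
          ← EuclideanSpace.real_norm_sq_eq]
        ring
    _ ≤ (2 * d * q) ^ 2 * q / q ^ 4 := by
        gcongr
        linarith
    _ = 4 * (d : ℝ) ^ 2 / q := by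
        field_simp
        ring

/-- For `d ≥ 3`, `n ≥ 1` and `σ_n^{il}(x) = x^i x^l/(|x|²+1/n)`:
`Σ_i ∂_i σ_n^{il}(x) = ((d−1)|x|² + (d+1)/n) x^l/(|x|²+1/n)²` and
`Σ_l (Σ_i ∂_i σ_n^{il}(x))² ≤ 4d²/(|x|²+1/n)`. -/
theorem stmt14 (d n : ℕ) (hd : 3 ≤ d) (hn : 1 ≤ n) :
    ∀ x : EuclideanSpace ℝ (Fin d),
      (∀ l, ∑ i, pd i (sFld d n i l) x =
        (((d : ℝ) - 1) * ‖x‖ ^ 2 + ((d : ℝ) + 1) / (n : ℝ)) * x l /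
          (‖x‖ ^ 2 + 1 / (n : ℝ)) ^ 2) ∧
      ∑ l, (∑ i, pd i (sFld d n i l) x) ^ 2 ≤
        4 * (d : ℝ) ^ 2 / (‖x‖ ^ 2 + 1 / (n : ℝ)) := by
  intro x
  have hc : (0 : ℝ) < 1 / n := by
    have : (0 : ℝ) < n := by exact_mod_cast hn
    positivity
  have hdiv (l : Fin d) := sum_pd_coord_mul_coord_div_normSq_add (x := x)
    (by positivity : ‖x‖ ^ 2 + 1 / (n : ℝ) ≠ 0) l
  unfold sFld
  simp only [hdiv]
  exact ⟨fun l => by rw [mul_one_div], sum_sq_coord_mul_div_normSq_add_sq_le (by omega) hc x⟩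
end
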